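/- arXiv:1901.08411 — 10 statements merged into one kernel-verified Lean document; each statement's English description precedes it below -/
import Mathlib

section
/- Let U be a unitary n×n complex matrix, let J = {1,...,n}, and let α, β be subsets of J. Then rank(U(α, β)) = rank(U(J\α, J\β)) + |α| + |β| − n, where U(α, β) denotes the submatrix of U with rows indexed by α and columns indexed by β. -/
open Matrix
open scoped ComplexOrder

private lemma sum_dite_mem {n : ℕ} (s : Finset (Fin n)) (f : Fin n → ℂ)
    (x : {j // j ∈ s} → ℂ) :
    ∑ j : Fin n, f j * (if h : j ∈ s then x ⟨j, h⟩ else 0)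
      = ∑ j : {j // j ∈ s}, f (j : Fin n) * x j := by
  classical
  rw [← Finset.sum_subset (Finset.subset_univ s)
    (fun j _ hj => by rw [dif_neg hj, mul_zero])]
  rw [show (Finset.univ : Finset {j // j ∈ s}) = s.attach from rfl]
  rw [← Finset.sum_attach s (fun j => f j * (if h : j ∈ s then x ⟨j, h⟩ else 0))]
  exact Finset.sum_congr rfl fun j _ => by rw [dif_pos j.2]

private lemma sum_subtype_full {n : ℕ} (s : Finset (Fin n)) (f g : Fin n → ℂ)
    (hg : ∀ i, i ∉ s → g i = 0) :
    ∑ i : {v // v ∈ s}, f (i : Fin n) * g (i : Fin n) = ∑ i : Fin n, f i * g i := by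
  classical
  rw [← Finset.sum_subset (Finset.subset_univ s)
    (fun j _ hj => by rw [hg j hj, mul_zero])]
  rw [show (Finset.univ : Finset {j // j ∈ s}) = s.attach from rfl]
  exact Finset.sum_attach s (fun j => f j * g j)

private lemma key {n : ℕ} (U V : Matrix (Fin n) (Fin n) ℂ) (hVU : V * U = 1)
    (a a' b b' : Finset (Fin n)) (ha : ∀ i, i ∈ a' ↔ i ∉ a) (hb : ∀ j, j ∈ b' ↔ j ∉ b)
    (x : {j // j ∈ b'} → ℂ)
    (hx : (U.submatrix (fun i : {v // v ∈ a'} => (i : Fin n))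
        (fun j : {v // v ∈ b'} => (j : Fin n))).mulVec x = 0) :
    (V.submatrix (fun i : {v // v ∈ b} => (i : Fin n))
        (fun j : {v // v ∈ a} => (j : Fin n))).mulVec
      ((U.submatrix (fun i : {v // v ∈ a} => (i : Fin n))
        (fun j : {v // v ∈ b'} => (j : Fin n))).mulVec x) = 0 ∧
    (V.submatrix (fun i : {v // v ∈ b'} => (i : Fin n))
        (fun j : {v // v ∈ a} => (j : Fin n))).mulVec
      ((U.submatrix (fun i : {v // v ∈ a} => (i : Fin n))
        (fun j : {v // v ∈ b'} => (j : Fin n))).mulVec x) = x := by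
  classical
  set xt : Fin n → ℂ := fun j => if h : j ∈ b' then x ⟨j, h⟩ else 0 with hxt
  have hA : ∀ i : Fin n, U.mulVec xt i = ∑ j : {v // v ∈ b'}, U i (j : Fin n) * x j := by
    intro i
    simpa [mulVec, dotProduct, hxt] using sum_dite_mem b' (fun j => U i j) x
  have hB : ∀ i : Fin n, i ∉ a → U.mulVec xt i = 0 := by
    intro i hi
    have h' : i ∈ a' := (ha i).2 hi
    rw [hA i]
    simpa [mulVec, dotProduct] using congrFun hx ⟨i, h'⟩
  have hC : V.mulVec (U.mulVec xt) = xt := by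
    rw [mulVec_mulVec, hVU, one_mulVec]
  have hStep : ∀ j : Fin n, ∑ i : {v // v ∈ a}, V j (i : Fin n)
      * ((U.submatrix (fun i : {v // v ∈ a} => (i : Fin n))
          (fun j : {v // v ∈ b'} => (j : Fin n))).mulVec x i) = xt j := by
    intro j
    have e1 : ∀ i : {v // v ∈ a},
        (U.submatrix (fun i : {v // v ∈ a} => (i : Fin n))
          (fun j : {v // v ∈ b'} => (j : Fin n))).mulVec x i
          = U.mulVec xt (i : Fin n) := by
      intro i
      rw [hA]
      rfl
    calc ∑ i : {v // v ∈ a}, V j (i : Fin n)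
        * ((U.submatrix (fun i : {v // v ∈ a} => (i : Fin n))
            (fun j : {v // v ∈ b'} => (j : Fin n))).mulVec x i)
        = ∑ i : {v // v ∈ a}, V j (i : Fin n) * U.mulVec xt (i : Fin n) := by
          exact Finset.sum_congr rfl fun i _ => by rw [e1 i]
      _ = ∑ i : Fin n, V j i * U.mulVec xt i :=
          sum_subtype_full a (fun i => V j i) (U.mulVec xt) hB
      _ = V.mulVec (U.mulVec xt) j := rfl
      _ = xt j := by rw [hC]
  constructor
  · funext j
    have := hStep (j : Fin n)
    have hj' : (j : Fin n) ∉ b' := fun h => (hb j).1 h j.2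
    simpa [mulVec, dotProduct, hxt, hj'] using this
  · funext j
    have := hStep (j : Fin n)
    have hj' : (j : Fin n) ∈ b' := j.2
    simp only [hxt, dif_pos hj', Subtype.coe_eta] at this
    simpa [mulVec, dotProduct] using this

private lemma ker_dim_le {n : ℕ} (U V : Matrix (Fin n) (Fin n) ℂ) (hVU : V * U = 1)
    (a a' b b' : Finset (Fin n)) (ha : ∀ i, i ∈ a' ↔ i ∉ a) (hb : ∀ j, j ∈ b' ↔ j ∉ b) :
    Module.finrank ℂ (LinearMap.ker (U.submatrix (fun i : {v // v ∈ a'} => (i : Fin n))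
        (fun j : {v // v ∈ b'} => (j : Fin n))).mulVecLin)
      ≤ Module.finrank ℂ (LinearMap.ker (V.submatrix (fun i : {v // v ∈ b} => (i : Fin n))
        (fun j : {v // v ∈ a} => (j : Fin n))).mulVecLin) := by
  classical
  set M := U.submatrix (fun i : {v // v ∈ a} => (i : Fin n))
      (fun j : {v // v ∈ b'} => (j : Fin n)) with hM
  have hmem : ∀ x ∈ LinearMap.ker (U.submatrix (fun i : {v // v ∈ a'} => (i : Fin n))
      (fun j : {v // v ∈ b'} => (j : Fin n))).mulVecLin,
      M.mulVecLin x ∈ LinearMap.ker (V.submatrix (fun i : {v // v ∈ b} => (i : Fin n))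
        (fun j : {v // v ∈ a} => (j : Fin n))).mulVecLin := by
    intro x hx
    exact (key U V hVU a a' b b' ha hb x hx).1
  refine LinearMap.finrank_le_finrank_of_injective
    (f := M.mulVecLin.restrict hmem) ?_
  intro x y hxy
  have h1 := (key U V hVU a a' b b' ha hb x.1 x.2).2
  have h2 := (key U V hVU a a' b b' ha hb y.1 y.2).2
  have : M.mulVec x.1 = M.mulVec y.1 := congrArg Subtype.val hxy
  ext1
  rw [← h1, ← h2, this]

/-- **Nullity Theorem for unitary matrices.**
If `U` is a unitary `n × n` complex matrix and `α, β ⊆ {1,…,n}`, then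
`rank U(α, β) = rank U(αᶜ, βᶜ) + |α| + |β| − n` (as integers). -/
theorem nullity_theorem_unitary (n : ℕ) (U : Matrix (Fin n) (Fin n) ℂ)
    (hU : U ∈ Matrix.unitaryGroup (Fin n) ℂ) (α β : Finset (Fin n)) :
    ((U.submatrix (fun i : {x // x ∈ α} => (i : Fin n))
        (fun j : {x // x ∈ β} => (j : Fin n))).rank : ℤ)
      = ((U.submatrix (fun i : {x // x ∈ αᶜ} => (i : Fin n))
            (fun j : {x // x ∈ βᶜ} => (j : Fin n))).rank : ℤ)
        + α.card + β.card - n := by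
  classical
  have hVU : Uᴴ * U = 1 := by
    have := hU.1
    rwa [Matrix.star_eq_conjTranspose] at this
  have hUV : U * Uᴴ = 1 := by
    have := hU.2
    rwa [Matrix.star_eq_conjTranspose] at this
  have ha : ∀ i, i ∈ αᶜ ↔ i ∉ α := fun i => Finset.mem_compl
  have hb : ∀ j, j ∈ βᶜ ↔ j ∉ β := fun j => Finset.mem_compl
  have ha' : ∀ i, i ∈ α ↔ i ∉ αᶜ := fun i => by simp
  have hb' : ∀ j, j ∈ β ↔ j ∉ βᶜ := fun j => by simp
  -- kernel dimensions are equal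
  have hk : Module.finrank ℂ (LinearMap.ker (U.submatrix
        (fun i : {v // v ∈ αᶜ} => (i : Fin n))
        (fun j : {v // v ∈ βᶜ} => (j : Fin n))).mulVecLin)
      = Module.finrank ℂ (LinearMap.ker (Uᴴ.submatrix
        (fun i : {v // v ∈ β} => (i : Fin n))
        (fun j : {v // v ∈ α} => (j : Fin n))).mulVecLin) :=
    le_antisymm (ker_dim_le U Uᴴ hVU α αᶜ β βᶜ ha hb)
      (ker_dim_le Uᴴ U hUV βᶜ β αᶜ α hb' ha')
  -- rank-nullity for the two matrices
  have r1 : (Uᴴ.submatrix (fun i : {v // v ∈ β} => (i : Fin n))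
        (fun j : {v // v ∈ α} => (j : Fin n))).rank
      + Module.finrank ℂ (LinearMap.ker (Uᴴ.submatrix
        (fun i : {v // v ∈ β} => (i : Fin n))
        (fun j : {v // v ∈ α} => (j : Fin n))).mulVecLin) = α.card := by
    rw [Matrix.rank]
    rw [LinearMap.finrank_range_add_finrank_ker]
    simp [Module.finrank_pi]
  have r2 : (U.submatrix (fun i : {v // v ∈ αᶜ} => (i : Fin n))
        (fun j : {v // v ∈ βᶜ} => (j : Fin n))).rank
      + Module.finrank ℂ (LinearMap.ker (U.submatrix
        (fun i : {v // v ∈ αᶜ} => (i : Fin n))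
        (fun j : {v // v ∈ βᶜ} => (j : Fin n))).mulVecLin) = βᶜ.card := by
    rw [Matrix.rank]
    rw [LinearMap.finrank_range_add_finrank_ker]
    simp [Module.finrank_pi, Finset.card_compl]
  have hct : (U.submatrix (fun i : {x // x ∈ α} => (i : Fin n))
        (fun j : {x // x ∈ β} => (j : Fin n))).rank
      = (Uᴴ.submatrix (fun i : {v // v ∈ β} => (i : Fin n))
        (fun j : {v // v ∈ α} => (j : Fin n))).rank := by
    rw [← Matrix.rank_conjTranspose (U.submatrix _ _), Matrix.conjTranspose_submatrix]
  have hcard : βᶜ.card = n - β.card := by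
    rw [Finset.card_compl, Fintype.card_fin]
  have hβn : β.card ≤ n := by
    simpa using (Finset.card_le_card (Finset.subset_univ β))
  rw [hct]
  omega
end

section
/- Let U be a unitary n×n complex matrix. Then for every h with 1 ≤ h ≤ n−1, rank(U(1:h, h+1:n)) = rank(U(h+1:n, 1:h)), i.e. the off-diagonal blocks determined by any splitting of the index set into {1,...,h} and {h+1,...,n} have equal rank. -/
open Matrix FiniteDimensional
open scoped ComplexOrder

-- nullity lemma
lemma aux_nullity_le (m : ℕ) (X Y : Matrix (Fin m) (Fin m) ℂ) :
    Module.finrank ℂ (LinearMap.ker (1 - X * Y).mulVecLin)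
      ≤ Module.finrank ℂ (LinearMap.ker (1 - Y * X).mulVecLin) := by
  have hmem : ∀ x ∈ LinearMap.ker (1 - X * Y).mulVecLin,
      Y.mulVecLin x ∈ LinearMap.ker (1 - Y * X).mulVecLin := by
    intro x hx
    simp only [LinearMap.mem_ker, mulVecLin_apply, sub_mulVec, one_mulVec,
      mulVec_mulVec, sub_eq_zero] at hx
    simp only [LinearMap.mem_ker, mulVecLin_apply, sub_mulVec, one_mulVec, sub_eq_zero]
    rw [mulVec_mulVec, Matrix.mul_assoc, ← mulVec_mulVec, ← hx]
  let f : LinearMap.ker (1 - X * Y).mulVecLin →ₗ[ℂ] LinearMap.ker (1 - Y * X).mulVecLin :=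
    LinearMap.restrict Y.mulVecLin hmem
  have hinj : Function.Injective f := by
    intro x y hxy
    have h1 : Y.mulVecLin x.1 = Y.mulVecLin y.1 := congrArg Subtype.val hxy
    have hx := x.2; have hy := y.2
    simp only [LinearMap.mem_ker, mulVecLin_apply, sub_mulVec, one_mulVec,
      mulVec_mulVec, sub_eq_zero] at hx hy
    ext
    simp only [mulVecLin_apply] at h1
    rw [hx, hy, ← mulVec_mulVec, ← mulVec_mulVec, h1]
  exact LinearMap.finrank_le_finrank_of_injective hinj

lemma aux_rank (m : ℕ) (X Y : Matrix (Fin m) (Fin m) ℂ) :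
    (1 - X * Y).rank = (1 - Y * X).rank := by
  have h1 := (1 - X*Y).mulVecLin.finrank_range_add_finrank_ker
  have h2 := (1 - Y*X).mulVecLin.finrank_range_add_finrank_ker
  have e := le_antisymm (aux_nullity_le m X Y) (aux_nullity_le m Y X)
  rw [Module.finrank_pi] at h1 h2
  rw [Matrix.rank, Matrix.rank]
  simp only [Fintype.card_fin] at h1 h2
  omega

/-- For a unitary matrix `U ∈ ℂ^{n×n}` and any `1 ≤ h ≤ n − 1`, the off-diagonal
blocks `U(1:h, h+1:n)` and `U(h+1:n, 1:h)` have equal rank. -/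
theorem offdiag_blocks_equal_rank (n h : ℕ) (hh1 : 1 ≤ h) (hh2 : h ≤ n - 1)
    (U : Matrix (Fin n) (Fin n) ℂ) (hU : U ∈ Matrix.unitaryGroup (Fin n) ℂ) :
    (Matrix.of fun (i : Fin h) (j : Fin (n - h)) =>
        U ⟨i.1, by omega⟩ ⟨h + j.1, by omega⟩).rank
      = (Matrix.of fun (i : Fin (n - h)) (j : Fin h) =>
          U ⟨h + i.1, by omega⟩ ⟨j.1, by omega⟩).rank := by
  have hn : h < n := by omega
  set A : Matrix (Fin h) (Fin h) ℂ :=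
    Matrix.of fun i j => U ⟨i.1, by omega⟩ ⟨j.1, by omega⟩ with hA
  set B : Matrix (Fin h) (Fin (n - h)) ℂ :=
    Matrix.of fun i j => U ⟨i.1, by omega⟩ ⟨h + j.1, by omega⟩ with hB
  set C : Matrix (Fin (n - h)) (Fin h) ℂ :=
    Matrix.of fun i j => U ⟨h + i.1, by omega⟩ ⟨j.1, by omega⟩ with hC
  have hnn : h + (n - h) = n := by omega
  have split : ∀ g : Fin n → ℂ, ∑ k, g k =
      (∑ a : Fin h, g ⟨a.1, by omega⟩) + ∑ b : Fin (n - h), g ⟨h + b.1, by omega⟩ := by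
    intro g
    rw [← Equiv.sum_comp (finSumFinEquiv.trans (finCongr hnn)) g, Fintype.sum_sum_type]
    rfl
  have hU1 : U * star U = 1 := Matrix.mem_unitaryGroup_iff.mp hU
  have hU2 : star U * U = 1 := Matrix.mem_unitaryGroup_iff'.mp hU
  have key1 : ∀ i j : Fin n, ∑ k, U i k * star (U j k) = (1 : Matrix (Fin n) (Fin n) ℂ) i j := by
    intro i j
    rw [← hU1, Matrix.mul_apply]
    exact Finset.sum_congr rfl fun k _ => by rw [Matrix.star_apply]
  have key2 : ∀ i j : Fin n, ∑ k, star (U k i) * U k j = (1 : Matrix (Fin n) (Fin n) ℂ) i j := by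
    intro i j
    rw [← hU2, Matrix.mul_apply]
    exact Finset.sum_congr rfl fun k _ => by rw [Matrix.star_apply]
  have one_eq : ∀ (i j : Fin h) (hi : i.1 < n) (hj : j.1 < n),
      (1 : Matrix (Fin n) (Fin n) ℂ) ⟨i.1, hi⟩ ⟨j.1, hj⟩ = (1 : Matrix (Fin h) (Fin h) ℂ) i j := by
    intro i j hi hj
    rw [Matrix.one_apply, Matrix.one_apply]
    congr 1
    simp [Fin.ext_iff]
  have hBB : A * Aᴴ + B * Bᴴ = 1 := by
    ext i j
    have := split (fun k => U ⟨i.1, by omega⟩ k * star (U ⟨j.1, by omega⟩ k))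
    rw [key1] at this
    simp only [Matrix.add_apply, Matrix.mul_apply, conjTranspose_apply, hA, hB, Matrix.of_apply]
    rw [← this, one_eq]
  have hCC : Aᴴ * A + Cᴴ * C = 1 := by
    ext i j
    have := split (fun k => star (U k ⟨i.1, by omega⟩) * U k ⟨j.1, by omega⟩)
    rw [key2] at this
    simp only [Matrix.add_apply, Matrix.mul_apply, conjTranspose_apply, hA, hC, Matrix.of_apply]
    rw [← this, one_eq]
  have e1 : B * Bᴴ = 1 - A * Aᴴ := by rw [← hBB, add_sub_cancel_left]
  have e2 : Cᴴ * C = 1 - Aᴴ * A := by rw [← hCC, add_sub_cancel_left]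
  calc B.rank = (B * Bᴴ).rank := (Matrix.rank_self_mul_conjTranspose B).symm
    _ = (1 - A * Aᴴ).rank := by rw [e1]
    _ = (1 - Aᴴ * A).rank := aux_rank h A Aᴴ
    _ = (Cᴴ * C).rank := by rw [e2]
    _ = C.rank := Matrix.rank_conjTranspose_mul_self C
end

section
/- Let G ∈ ℂ^{n×n} be a unitary matrix that is CMV structured with block size k (with n = 2sk). Then for every p with 1 ≤ p ≤ s−1, the 2k×2k submatrix G(2pk+1 : 2(p+1)k, (2p−1)k+1 : (2p+1)k) has rank exactly k. -/
/-!
Write `M` for the corner window and `T` for the `2k × 2k` window of `G` directly above it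
(block rows `2p − 1, 2p`, same columns). By the band structure, rows of `G` in block rows
`≥ 2p + 1` vanish left of the window and rows in block rows `≤ 2p` vanish right of it, so
orthogonality of the rows of the unitary `G` localises to `M * Tᴴ = 0`. Sylvester's
inequality gives `rank M + rank T ≤ 2k`, while the nonsingular blocks `G_{2p+2,2p}` inside
`M` and `G_{2p−1,2p+1}` inside `T` give `rank M ≥ k` and `rank T ≥ k`.
-/

open Matrix

lemma blk_lt {m k : ℕ} (i : Fin m) (a : Fin k) : i.1 * k + a.1 < m * k := by
  have h1 : i.1 * k + a.1 < (i.1 + 1) * k := by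
    have := a.2
    rw [Nat.add_mul]
    omega
  have h2 : (i.1 + 1) * k ≤ m * k := Nat.mul_le_mul_right _ i.2
  omega

/-- The `(i,j)`-th (0-based) `k × k` block of an `(m·k) × (m·k)` matrix. -/
def blk {m k : ℕ} (G : Matrix (Fin (m * k)) (Fin (m * k)) ℂ) (i j : Fin m) :
    Matrix (Fin k) (Fin k) ℂ :=
  Matrix.of fun a b => G ⟨i.1 * k + a.1, blk_lt i a⟩ ⟨j.1 * k + b.1, blk_lt j b⟩

/-- A square matrix is lower triangular: the entries above the diagonal vanish. -/
def LowerTriangular {k : ℕ} (M : Matrix (Fin k) (Fin k) ℂ) : Prop :=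
  ∀ a b : Fin k, a < b → M a b = 0

/-- A square matrix is upper triangular: the entries below the diagonal vanish. -/
def UpperTriangular {k : ℕ} (M : Matrix (Fin k) (Fin k) ℂ) : Prop :=
  ∀ a b : Fin k, b < a → M a b = 0

/-- `G ∈ ℂ^{n×n}` (with `n = 2sk`), partitioned into `k × k` blocks `G_{ij}`
(`1 ≤ i,j ≤ 2s`), is *CMV structured with block size `k`* if `G_{ij} = 0`
whenever `j < 2⌈i/2⌉ − 2` or `j > 2⌈i/2⌉ + 1`, the blocks `G_{2p−1,2p+1}`
(`1 ≤ p ≤ s−1`) are nonsingular lower triangular, and the blocks `G_{2,1}` and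
`G_{2p,2p−2}` (`2 ≤ p ≤ s`) are nonsingular upper triangular.
(Below, block indices are 0-based: block `(i₀,j₀)` corresponds to `(i₀+1, j₀+1)`,
and `⌈(i₀+1)/2⌉ = (i₀+2)/2` with natural division.) -/
def IsCMV (s k : ℕ) (G : Matrix (Fin (2 * s * k)) (Fin (2 * s * k)) ℂ) : Prop :=
  (∀ i j : Fin (2 * s),
      (j.1 + 3 < 2 * ((i.1 + 2) / 2) ∨ 2 * ((i.1 + 2) / 2) < j.1) → blk G i j = 0) ∧
  (∀ p : ℕ, ∀ _ : 1 ≤ p, ∀ _ : p ≤ s - 1,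
      LowerTriangular (blk G ⟨2 * p - 2, by omega⟩ ⟨2 * p, by omega⟩) ∧
      (blk G ⟨2 * p - 2, by omega⟩ ⟨2 * p, by omega⟩).det ≠ 0) ∧
  (∀ _ : 1 ≤ s,
      UpperTriangular (blk G ⟨1, by omega⟩ ⟨0, by omega⟩) ∧
      (blk G ⟨1, by omega⟩ ⟨0, by omega⟩).det ≠ 0) ∧
  (∀ p : ℕ, ∀ _ : 2 ≤ p, ∀ _ : p ≤ s,
      UpperTriangular (blk G ⟨2 * p - 1, by omega⟩ ⟨2 * p - 3, by omega⟩) ∧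
      (blk G ⟨2 * p - 1, by omega⟩ ⟨2 * p - 3, by omega⟩).det ≠ 0)

lemma row_lt {s k p : ℕ} (hp1 : 1 ≤ p) (hp2 : p ≤ s - 1) (a : Fin (2 * k)) :
    2 * p * k + a.1 < 2 * s * k := by
  have h1 : 2 * p * k + a.1 < (2 * p + 2) * k := by
    have := a.2; rw [Nat.add_mul]; omega
  have h2 : (2 * p + 2) * k ≤ 2 * s * k := Nat.mul_le_mul_right _ (by omega)
  omega

lemma col_lt {s k p : ℕ} (hp1 : 1 ≤ p) (hp2 : p ≤ s - 1) (b : Fin (2 * k)) :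
    (2 * p - 1) * k + b.1 < 2 * s * k := by
  have h1 : (2 * p - 1) * k + b.1 < ((2 * p - 1) + 2) * k := by
    have := b.2; rw [Nat.add_mul]; omega
  have h2 : ((2 * p - 1) + 2) * k ≤ 2 * s * k := Nat.mul_le_mul_right _ (by omega)
  omega

open Function

namespace Matrix

theorem card_le_rank_of_det_submatrix_ne_zero {m n ι K : Type*} [Fintype n] [Fintype ι]
    [DecidableEq ι] [Field K] {A : Matrix m n K} {r : ι → m} {c : ι → n}
    (h : (A.submatrix r c).det ≠ 0) : Fintype.card ι ≤ A.rank :=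
  calc Fintype.card ι = (A.submatrix r c).rank :=
        (rank_of_isUnit _ ((isUnit_iff_isUnit_det _).2 h.isUnit)).symm
    _ ≤ A.rank := rank_submatrix_le A r c

theorem submatrix_mul_conjTranspose_submatrix_eq_zero_of_mem_unitaryGroup
    {m ι κ κ' α : Type*} [Fintype m] [DecidableEq m] [Fintype ι] [CommRing α] [StarRing α]
    {U : Matrix m m α} (hU : U ∈ unitaryGroup m α) {r : κ → m} {r' : κ' → m} {c : ι → m}
    (hc : Injective c) (hrr' : ∀ a b, r a ≠ r' b)
    (hsupp : ∀ a b, ∀ j ∉ Set.range c, U (r a) j * star (U (r' b) j) = 0) :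
    U.submatrix r c * (U.submatrix r' c)ᴴ = 0 := by
  ext a b
  have hrows : (U * star U) (r a) (r' b) = 0 := by
    rw [mem_unitaryGroup_iff.1 hU, one_apply_ne (hrr' a b)]
  rw [mul_apply, zero_apply, ← hrows, mul_apply]
  exact Fintype.sum_of_injective c hc _ _ (hsupp a b) fun _ => rfl

end Matrix

theorem le_rank_submatrix_of_det_blk_ne_zero {m k : ℕ}
    {G : Matrix (Fin (m * k)) (Fin (m * k)) ℂ} {i j : Fin m} (h : (blk G i j).det ≠ 0)
    {ι κ : Type*} [Fintype κ]
    {r : ι → Fin (m * k)} {c : κ → Fin (m * k)} (f : Fin k → ι) (g : Fin k → κ)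
    (hr : ∀ a, (r (f a) : ℕ) = i * k + a) (hc : ∀ b, (c (g b) : ℕ) = j * k + b) :
    k ≤ (G.submatrix r c).rank := by
  have hblk : (G.submatrix r c).submatrix f g = blk G i j := by
    ext a b
    exact congr_arg₂ G (Fin.ext (hr a)) (Fin.ext (hc b))
  simpa only [Fintype.card_fin] using card_le_rank_of_det_submatrix_ne_zero (hblk ▸ h :
    ((G.submatrix r c).submatrix f g).det ≠ 0)

namespace IsCMV

variable {s k : ℕ} {G : Matrix (Fin (2 * s * k)) (Fin (2 * s * k)) ℂ}

theorem apply_eq_zero (hG : IsCMV s k G) {u c : Fin (2 * s * k)}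
    (h : c / k + 3 < 2 * ((u / k + 2) / 2) ∨ 2 * ((u / k + 2) / 2) < c / k) : G u c = 0 := by
  have hk : 0 < k := Nat.pos_of_ne_zero fun hk => by subst hk; exact u.elim0
  have hu : u / k < 2 * s := (Nat.div_lt_iff_lt_mul hk).2 u.2
  have hc : c / k < 2 * s := (Nat.div_lt_iff_lt_mul hk).2 c.2
  have hblk := congrFun (congrFun (hG.1 ⟨u / k, hu⟩ ⟨c / k, hc⟩ h) ⟨u % k, Nat.mod_lt _ hk⟩)
    ⟨c % k, Nat.mod_lt _ hk⟩
  simpa only [blk, of_apply, Matrix.zero_apply, Nat.div_add_mod', Fin.eta] using hblk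

theorem apply_eq_zero_of_left (hG : IsCMV s k G) {p : ℕ} {u c : Fin (2 * s * k)}
    (hu : 2 * p * k ≤ u) (hc : c < (2 * p - 1) * k) : G u c = 0 := by
  have hk : 0 < k := Nat.pos_of_ne_zero fun hk => by subst hk; simp at hc
  have hu' : 2 * p ≤ u / k := (Nat.le_div_iff_mul_le hk).2 hu
  have hc' : c / k < 2 * p - 1 := (Nat.div_lt_iff_lt_mul hk).2 hc
  refine hG.apply_eq_zero (Or.inl ?_)
  generalize (u : ℕ) / k = i at *
  generalize (c : ℕ) / k = j at *
  omega

theorem apply_eq_zero_of_right (hG : IsCMV s k G) {p : ℕ} {v c : Fin (2 * s * k)}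
    (hv : v < 2 * p * k) (hc : (2 * p + 1) * k ≤ c) : G v c = 0 := by
  have hk : 0 < k := Nat.pos_of_ne_zero fun hk => by subst hk; simp at hv
  have hv' : v / k < 2 * p := (Nat.div_lt_iff_lt_mul hk).2 hv
  have hc' : 2 * p + 1 ≤ c / k := (Nat.le_div_iff_mul_le hk).2 hc
  refine hG.apply_eq_zero (Or.inr ?_)
  generalize (v : ℕ) / k = i at *
  generalize (c : ℕ) / k = j at *
  omega

theorem submatrix_mul_conjTranspose_submatrix_eq_zero
    (hGu : G ∈ unitaryGroup (Fin (2 * s * k)) ℂ) (hG : IsCMV s k G) {p : ℕ}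
    {ι κ κ' : Type*} [Fintype ι] {r : κ → Fin (2 * s * k)} {r' : κ' → Fin (2 * s * k)}
    {c : ι → Fin (2 * s * k)} (hc : Injective c) (hr : ∀ a, 2 * p * k ≤ r a)
    (hr' : ∀ b, r' b < 2 * p * k)
    (hcover : ∀ j : Fin (2 * s * k), (2 * p - 1) * k ≤ j → j < (2 * p + 1) * k →
      j ∈ Set.range c) :
    G.submatrix r c * (G.submatrix r' c)ᴴ = 0 := by
  refine submatrix_mul_conjTranspose_submatrix_eq_zero_of_mem_unitaryGroup hGu hc
    (fun a b hab => (hr' b).not_ge (hab ▸ hr a)) fun a b j hj => ?_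
  rcases lt_or_ge (j : ℕ) ((2 * p - 1) * k) with hleft | hmid
  · rw [hG.apply_eq_zero_of_left (hr a) hleft, zero_mul]
  · have hright : (2 * p + 1) * k ≤ j := not_lt.1 fun h => hj (hcover j hmid h)
    rw [hG.apply_eq_zero_of_right (hr' b) hright, star_zero, mul_zero]

end IsCMV

/-- For a unitary CMV structured matrix `G` with block size `k` (`n = 2sk`), the
`2k × 2k` submatrix `G(2pk+1 : 2(p+1)k, (2p−1)k+1 : (2p+1)k)` has rank exactly `k`
for every `1 ≤ p ≤ s − 1`. -/
theorem cmv_corner_rank (s k : ℕ) (G : Matrix (Fin (2 * s * k)) (Fin (2 * s * k)) ℂ)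
    (hGu : G ∈ Matrix.unitaryGroup (Fin (2 * s * k)) ℂ) (hG : IsCMV s k G)
    (p : ℕ) (hp1 : 1 ≤ p) (hp2 : p ≤ s - 1) :
    (Matrix.of fun a b : Fin (2 * k) =>
        G ⟨2 * p * k + a.1, row_lt hp1 hp2 a⟩
          ⟨(2 * p - 1) * k + b.1, col_lt hp1 hp2 b⟩).rank = k := by
  have e₁ : (2 * p - 2) * k + k = (2 * p - 1) * k := by rw [← Nat.succ_mul]; congr 1; omega
  have e₂ : (2 * p - 1) * k + k = 2 * p * k := by rw [← Nat.succ_mul]; congr 1; omega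
  have e₃ : 2 * p * k + k = (2 * p + 1) * k := (Nat.succ_mul _ _).symm
  let r : Fin (2 * k) → Fin (2 * s * k) := fun a => ⟨2 * p * k + a, row_lt hp1 hp2 a⟩
  let r' : Fin (2 * k) → Fin (2 * s * k) := fun a =>
    ⟨(2 * p - 2) * k + a, by have := row_lt hp1 hp2 a; omega⟩
  let c : Fin (2 * k) → Fin (2 * s * k) := fun b => ⟨(2 * p - 1) * k + b, col_lt hp1 hp2 b⟩
  have hMT : G.submatrix r c * (G.submatrix r' c)ᴴ = 0 :=
    hG.submatrix_mul_conjTranspose_submatrix_eq_zero hGu (p := p)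
      (fun a b h => Fin.ext (by simpa [c] using congr_arg Fin.val h))
      (fun a => by simp [r]) (fun b => by simp [r']; omega)
      (fun j hj hj' => ⟨⟨j - (2 * p - 1) * k, by omega⟩, Fin.ext (by simp [c]; omega)⟩)
  have hM : k ≤ (G.submatrix r c).rank :=
    le_rank_submatrix_of_det_blk_ne_zero (hG.2.2.2 (p + 1) (by omega) (by omega)).2
      (fun a => ⟨k + a, by omega⟩) (fun b => ⟨b, by omega⟩)
      (fun a => by simp [r, show 2 * (p + 1) - 1 = 2 * p + 1 by omega]; omega)
      (fun b => by simp [c, show 2 * (p + 1) - 3 = 2 * p - 1 by omega])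
  have hT : k ≤ (G.submatrix r' c).rank :=
    le_rank_submatrix_of_det_blk_ne_zero (hG.2.1 p hp1 hp2).2
      (fun a => ⟨a, by omega⟩) (fun b => ⟨k + b, by omega⟩)
      (fun a => by simp [r']) (fun b => by simp [c]; omega)
  have hsum := rank_add_rank_le_card_of_mul_eq_zero hMT
  rw [open scoped ComplexOrder in rank_conjTranspose (G.submatrix r' c), Fintype.card_fin] at hsum
  change (G.submatrix r c).rank = k
  omega
end

section
/- Let n = 2sk and let G₁ = diag(G_{1,1}, ..., G_{1,s}) and G₂ = diag(I_k, G_{2,2}, ..., G_{2,s}, G_{2,s+1}) be block diagonal unitary n×n matrices, where G_{2,s+1} is a k×k unitary matrix and all other diagonal blocks G_{i,j} are 2k×2k unitary matrices of bandwidth k such that, for each such block, G_{i,j}(k+1:2k, 1:k) is a nonsingular upper triangular matrix and G_{i,j}(1:k, k+1:2k) is a nonsingular lower triangular matrix. Then the product G = G₁G₂ is a unitary matrix that is CMV structured with block size k. -/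
open Matrix

/-- The square `k × k` submatrix of `M` with top-left corner at (0-based) `(r, c)`. -/
def subsq {n : ℕ} (M : Matrix (Fin n) (Fin n) ℂ) (k r c : ℕ)
    (hr : r + k ≤ n) (hc : c + k ≤ n) : Matrix (Fin k) (Fin k) ℂ :=
  Matrix.of fun a b => M ⟨r + a.1, by omega⟩ ⟨c + b.1, by omega⟩

lemma bnd_one {m k a : ℕ} (h : a + 1 ≤ m) : a * k + k ≤ m * k := by
  calc a * k + k = (a + 1) * k := by ring
    _ ≤ m * k := Nat.mul_le_mul_right _ h

lemma bnd_two {m k a : ℕ} (h : a + 2 ≤ m) : a * k + 2 * k ≤ m * k := by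
  calc a * k + 2 * k = (a + 2) * k := by ring
    _ ≤ m * k := Nat.mul_le_mul_right _ h

/-- A square matrix has bandwidth `k`: entries with `|row − column| > k` vanish. -/
def Band (k : ℕ) {m : ℕ} (M : Matrix (Fin m) (Fin m) ℂ) : Prop :=
  ∀ a b : Fin m, (b.1 + k < a.1 ∨ a.1 + k < b.1) → M a b = 0

/-- Index (0-based) of the diagonal block of `diag(I_k, G_{2,2}, …, G_{2,s}, G_{2,s+1})`
containing row/column `x`: block `0` is the leading `k × k` identity, blocks
`1, …, s−1` have size `2k`, block `s` is the trailing `k × k` block. -/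
def blkIdx2 (k x : ℕ) : ℕ := if x < k then 0 else (x - k) / (2 * k) + 1

/-- The pair `(G₁, G₂)` is a *CMV factorization* (as in the CMV factorization lemma):
`G₁ = diag(G_{1,1}, …, G_{1,s})` and `G₂ = diag(I_k, G_{2,2}, …, G_{2,s}, G_{2,s+1})`
are block diagonal unitary matrices, `G_{2,s+1}` is a `k × k` unitary matrix, and all
other diagonal blocks are `2k × 2k` unitary matrices of bandwidth `k` whose
`(k+1:2k, 1:k)` submatrix is nonsingular upper triangular and whose `(1:k, k+1:2k)`
submatrix is nonsingular lower triangular. -/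
def IsCMVFactor (s k : ℕ) (G₁ G₂ : Matrix (Fin (2 * s * k)) (Fin (2 * s * k)) ℂ) : Prop :=
  G₁ ∈ Matrix.unitaryGroup (Fin (2 * s * k)) ℂ ∧
  G₂ ∈ Matrix.unitaryGroup (Fin (2 * s * k)) ℂ ∧
  -- `G₁` is block diagonal with `s` diagonal blocks of size `2k`
  (∀ x y : Fin (2 * s * k), x.1 / (2 * k) ≠ y.1 / (2 * k) → G₁ x y = 0) ∧
  -- each diagonal block of `G₁` is unitary of bandwidth `k` with the corner conditions
  (∀ i : Fin s,
    subsq G₁ (2 * k) (2 * i.1 * k) (2 * i.1 * k) (bnd_two (by omega)) (bnd_two (by omega))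
        ∈ Matrix.unitaryGroup (Fin (2 * k)) ℂ ∧
    Band k (subsq G₁ (2 * k) (2 * i.1 * k) (2 * i.1 * k)
        (bnd_two (by omega)) (bnd_two (by omega))) ∧
    UpperTriangular (subsq G₁ k ((2 * i.1 + 1) * k) (2 * i.1 * k)
        (bnd_one (by omega)) (bnd_one (by omega))) ∧
    (subsq G₁ k ((2 * i.1 + 1) * k) (2 * i.1 * k)
        (bnd_one (by omega)) (bnd_one (by omega))).det ≠ 0 ∧
    LowerTriangular (subsq G₁ k (2 * i.1 * k) ((2 * i.1 + 1) * k)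
        (bnd_one (by omega)) (bnd_one (by omega))) ∧
    (subsq G₁ k (2 * i.1 * k) ((2 * i.1 + 1) * k)
        (bnd_one (by omega)) (bnd_one (by omega))).det ≠ 0) ∧
  -- `G₂` is block diagonal with blocks of sizes `k, 2k, …, 2k, k`
  (∀ x y : Fin (2 * s * k), blkIdx2 k x.1 ≠ blkIdx2 k y.1 → G₂ x y = 0) ∧
  -- the leading block of `G₂` is `I_k`
  (∀ x y : Fin (2 * s * k), x.1 < k → y.1 < k → G₂ x y = if x.1 = y.1 then 1 else 0) ∧
  -- the middle diagonal blocks of `G₂` are unitary of bandwidth `k` with corner conditions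
  (∀ j : Fin (s - 1),
    subsq G₂ (2 * k) ((2 * j.1 + 1) * k) ((2 * j.1 + 1) * k)
        (bnd_two (by omega)) (bnd_two (by omega)) ∈ Matrix.unitaryGroup (Fin (2 * k)) ℂ ∧
    Band k (subsq G₂ (2 * k) ((2 * j.1 + 1) * k) ((2 * j.1 + 1) * k)
        (bnd_two (by omega)) (bnd_two (by omega))) ∧
    UpperTriangular (subsq G₂ k ((2 * j.1 + 2) * k) ((2 * j.1 + 1) * k)
        (bnd_one (by omega)) (bnd_one (by omega))) ∧
    (subsq G₂ k ((2 * j.1 + 2) * k) ((2 * j.1 + 1) * k)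
        (bnd_one (by omega)) (bnd_one (by omega))).det ≠ 0 ∧
    LowerTriangular (subsq G₂ k ((2 * j.1 + 1) * k) ((2 * j.1 + 2) * k)
        (bnd_one (by omega)) (bnd_one (by omega))) ∧
    (subsq G₂ k ((2 * j.1 + 1) * k) ((2 * j.1 + 2) * k)
        (bnd_one (by omega)) (bnd_one (by omega))).det ≠ 0) ∧
  -- the trailing `k × k` block `G_{2,s+1}` of `G₂` is unitary
  (∀ _ : 1 ≤ s,
    subsq G₂ k ((2 * s - 1) * k) ((2 * s - 1) * k)
        (bnd_one (by omega)) (bnd_one (by omega)) ∈ Matrix.unitaryGroup (Fin k) ℂ)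

/-!
Index the `k × k` blocks from `0`. The `2k × 2k` diagonal blocks of `G₁` occupy block rows
`{2p, 2p + 1}`, so block `(i, w)` of `G₁` vanishes unless `w / 2 = i / 2`; those of `G₂` are
shifted by one block, so block `(w, j)` of `G₂` vanishes unless `(w + 1) / 2 = (j + 1) / 2`.
Hence in `blk (G₁ * G₂) i j = ∑ w, blk G₁ i w * blk G₂ w j` at most one term survives. This
gives the zero pattern of a CMV matrix, and each block that must be nonsingular triangular is
the product of two corner blocks of the same triangular shape (or of a corner of `G₁` with the
leading identity block of `G₂`).
-/

lemma UpperTriangular.mul {k : ℕ} {A B : Matrix (Fin k) (Fin k) ℂ}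
    (hA : UpperTriangular A) (hB : UpperTriangular B) : UpperTriangular (A * B) :=
  BlockTriangular.mul (b := id) hA hB

lemma LowerTriangular.mul {k : ℕ} {A B : Matrix (Fin k) (Fin k) ℂ}
    (hA : LowerTriangular A) (hB : LowerTriangular B) : LowerTriangular (A * B) :=
  BlockTriangular.mul (b := OrderDual.toDual) hA hB

lemma subsq_eq_blk {m k r c : ℕ} (G : Matrix (Fin (m * k)) (Fin (m * k)) ℂ) (i j : Fin m)
    (hi : r = i.1 * k) (hj : c = j.1 * k) (hr : r + k ≤ m * k) (hc : c + k ≤ m * k) :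
    subsq G k r c hr hc = blk G i j := by
  subst hi hj
  rfl

lemma blk_mul {m k : ℕ} (A B : Matrix (Fin (m * k)) (Fin (m * k)) ℂ) (i j : Fin m) :
    blk (A * B) i j = ∑ w, blk A i w * blk B w j := by
  ext a b
  simp only [blk, of_apply, mul_apply, Matrix.sum_apply]
  rw [← finProdFinEquiv.sum_comp, Fintype.sum_prod_type]
  refine Finset.sum_congr rfl fun w _ => Finset.sum_congr rfl fun c _ => ?_
  have hwc : finProdFinEquiv (w, c) = ⟨w.1 * k + c.1, blk_lt w c⟩ := by
    ext
    simp only [finProdFinEquiv_apply_val]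
    ring
  rw [hwc]

lemma blk_mul_eq_zero_of_forall {m k : ℕ} {A B : Matrix (Fin (m * k)) (Fin (m * k)) ℂ}
    {i j : Fin m} (h : ∀ w, blk A i w = 0 ∨ blk B w j = 0) :
    blk (A * B) i j = 0 := by
  rw [blk_mul]
  refine Finset.sum_eq_zero fun w _ => ?_
  rcases h w with h | h <;> simp [h]

lemma blk_mul_eq_of_forall_ne {m k : ℕ} {A B : Matrix (Fin (m * k)) (Fin (m * k)) ℂ}
    {i j : Fin m} (w : Fin m) (h : ∀ w' ≠ w, blk A i w' = 0 ∨ blk B w' j = 0) :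
    blk (A * B) i j = blk A i w * blk B w j := by
  rw [blk_mul]
  refine Finset.sum_eq_single w (fun w' _ hw' => ?_) (by simp)
  rcases h w' hw' with h | h <;> simp [h]

lemma mul_add_div_two_mul {k u c : ℕ} (hc : c < k) : (u * k + c) / (2 * k) = u / 2 := by
  rw [mul_comm 2 k, ← Nat.div_div_eq_div_mul, mul_comm u k, Nat.mul_add_div (by omega),
    Nat.div_eq_of_lt hc, add_zero]

lemma blkIdx2_mul_add {k w c : ℕ} (hc : c < k) : blkIdx2 k (w * k + c) = (w + 1) / 2 := by
  unfold blkIdx2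
  rcases w with _ | w
  · simp [hc]
  · have hk : k ≤ (w + 1) * k := Nat.le_mul_of_pos_left k w.succ_pos
    rw [if_neg (by omega), show (w + 1) * k + c - k = w * k + c by rw [Nat.succ_mul]; omega,
      mul_add_div_two_mul hc]
    omega

lemma blk_eq_zero_of_div_two_ne {m k : ℕ} {G : Matrix (Fin (m * k)) (Fin (m * k)) ℂ}
    (hG : ∀ x y : Fin (m * k), x.1 / (2 * k) ≠ y.1 / (2 * k) → G x y = 0)
    {i j : Fin m} (hij : i.1 / 2 ≠ j.1 / 2) : blk G i j = 0 := by
  ext a b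
  exact hG _ _ (by rwa [mul_add_div_two_mul a.2, mul_add_div_two_mul b.2])

lemma blk_eq_zero_of_succ_div_two_ne {m k : ℕ} {G : Matrix (Fin (m * k)) (Fin (m * k)) ℂ}
    (hG : ∀ x y : Fin (m * k), blkIdx2 k x.1 ≠ blkIdx2 k y.1 → G x y = 0)
    {i j : Fin m} (hij : (i.1 + 1) / 2 ≠ (j.1 + 1) / 2) : blk G i j = 0 := by
  ext a b
  exact hG _ _ (by rwa [blkIdx2_mul_add a.2, blkIdx2_mul_add b.2])

namespace IsCMVFactor

variable {s k : ℕ} {G₁ G₂ : Matrix (Fin (2 * s * k)) (Fin (2 * s * k)) ℂ}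

lemma blk_left_eq_zero_or_blk_right_eq_zero (h : IsCMVFactor s k G₁ G₂) {i w j : Fin (2 * s)}
    (hw : ¬(w.1 / 2 = i.1 / 2 ∧ (w.1 + 1) / 2 = (j.1 + 1) / 2)) :
    blk G₁ i w = 0 ∨ blk G₂ w j = 0 := by
  obtain ⟨-, -, hG₁, -, hG₂, -⟩ := h
  by_cases hwi : w.1 / 2 = i.1 / 2
  · exact .inr (blk_eq_zero_of_succ_div_two_ne hG₂ fun hwj => hw ⟨hwi, hwj⟩)
  · exact .inl (blk_eq_zero_of_div_two_ne hG₁ (Ne.symm hwi))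

lemma blk_mul_eq_zero (h : IsCMVFactor s k G₁ G₂) {i j : Fin (2 * s)}
    (hij : ∀ w : ℕ, w / 2 = i.1 / 2 → (w + 1) / 2 = (j.1 + 1) / 2 → False) :
    blk (G₁ * G₂) i j = 0 :=
  blk_mul_eq_zero_of_forall fun w =>
    h.blk_left_eq_zero_or_blk_right_eq_zero fun hw => hij w.1 hw.1 hw.2

lemma blk_mul_eq (h : IsCMVFactor s k G₁ G₂) {i j : Fin (2 * s)} (w : Fin (2 * s))
    (hij : ∀ w' : ℕ, w' / 2 = i.1 / 2 → (w' + 1) / 2 = (j.1 + 1) / 2 → w' = w.1) :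
    blk (G₁ * G₂) i j = blk G₁ i w * blk G₂ w j :=
  blk_mul_eq_of_forall_ne w fun w' hw' =>
    h.blk_left_eq_zero_or_blk_right_eq_zero fun hw => hw' (Fin.ext (hij w'.1 hw.1 hw.2))

lemma blk_right_eq_one (h : IsCMVFactor s k G₁ G₂) {o : Fin (2 * s)} (ho : o.1 = 0) :
    blk G₂ o o = 1 := by
  obtain ⟨-, -, -, -, -, hI, -⟩ := h
  ext a b
  simp only [blk, of_apply, ho, zero_mul, zero_add, one_apply]
  rw [hI _ _ a.2 b.2]
  simp [Fin.ext_iff]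

lemma lowerTriangular_blk_left (h : IsCMVFactor s k G₁ G₂) (q : ℕ) {i w : Fin (2 * s)}
    (hi : i.1 = 2 * q) (hw : w.1 = 2 * q + 1) :
    LowerTriangular (blk G₁ i w) ∧ (blk G₁ i w).det ≠ 0 := by
  obtain ⟨-, -, -, hG₁, -⟩ := h
  obtain ⟨-, -, -, -, hL, hd⟩ := hG₁ ⟨q, by omega⟩
  rw [subsq_eq_blk G₁ i w (by rw [hi]) (by rw [hw])] at hL hd
  exact ⟨hL, hd⟩

lemma upperTriangular_blk_left (h : IsCMVFactor s k G₁ G₂) (q : ℕ) {i w : Fin (2 * s)}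
    (hi : i.1 = 2 * q + 1) (hw : w.1 = 2 * q) :
    UpperTriangular (blk G₁ i w) ∧ (blk G₁ i w).det ≠ 0 := by
  obtain ⟨-, -, -, hG₁, -⟩ := h
  obtain ⟨-, -, hU, hd, -, -⟩ := hG₁ ⟨q, by omega⟩
  rw [subsq_eq_blk G₁ i w (by rw [hi]) (by rw [hw])] at hU hd
  exact ⟨hU, hd⟩

lemma lowerTriangular_blk_right (h : IsCMVFactor s k G₁ G₂) (q : ℕ) {w j : Fin (2 * s)}
    (hw : w.1 = 2 * q + 1) (hj : j.1 = 2 * q + 2) :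
    LowerTriangular (blk G₂ w j) ∧ (blk G₂ w j).det ≠ 0 := by
  obtain ⟨-, -, -, -, -, -, hG₂, -⟩ := h
  obtain ⟨-, -, -, -, hL, hd⟩ := hG₂ ⟨q, by omega⟩
  rw [subsq_eq_blk G₂ w j (by rw [hw]) (by rw [hj])] at hL hd
  exact ⟨hL, hd⟩

lemma upperTriangular_blk_right (h : IsCMVFactor s k G₁ G₂) (q : ℕ) {w j : Fin (2 * s)}
    (hw : w.1 = 2 * q + 2) (hj : j.1 = 2 * q + 1) :
    UpperTriangular (blk G₂ w j) ∧ (blk G₂ w j).det ≠ 0 := by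
  obtain ⟨-, -, -, -, -, -, hG₂, -⟩ := h
  obtain ⟨-, -, hU, hd, -, -⟩ := hG₂ ⟨q, by omega⟩
  rw [subsq_eq_blk G₂ w j (by rw [hw]) (by rw [hj])] at hU hd
  exact ⟨hU, hd⟩

lemma blk_mul_eq_blk_left (h : IsCMVFactor s k G₁ G₂) {i j : Fin (2 * s)}
    (hi : i.1 = 1) (hj : j.1 = 0) : blk (G₁ * G₂) i j = blk G₁ i j := by
  rw [h.blk_mul_eq j fun w _ _ => by omega, h.blk_right_eq_one hj, mul_one]

lemma lowerTriangular_blk_mul (h : IsCMVFactor s k G₁ G₂) (q : ℕ) {i j : Fin (2 * s)}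
    (hi : i.1 = 2 * q) (hj : j.1 = 2 * q + 2) :
    LowerTriangular (blk (G₁ * G₂) i j) ∧ (blk (G₁ * G₂) i j).det ≠ 0 := by
  let w : Fin (2 * s) := ⟨2 * q + 1, by omega⟩
  rw [h.blk_mul_eq w fun _ _ _ => by dsimp only [w]; omega]
  obtain ⟨hL₁, hd₁⟩ := h.lowerTriangular_blk_left q (w := w) hi rfl
  obtain ⟨hL₂, hd₂⟩ := h.lowerTriangular_blk_right q (w := w) rfl hj
  exact ⟨hL₁.mul hL₂, by rw [det_mul]; exact mul_ne_zero hd₁ hd₂⟩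

lemma upperTriangular_blk_mul (h : IsCMVFactor s k G₁ G₂) (q : ℕ) {i j : Fin (2 * s)}
    (hi : i.1 = 2 * q + 3) (hj : j.1 = 2 * q + 1) :
    UpperTriangular (blk (G₁ * G₂) i j) ∧ (blk (G₁ * G₂) i j).det ≠ 0 := by
  let w : Fin (2 * s) := ⟨2 * q + 2, by omega⟩
  rw [h.blk_mul_eq w fun _ _ _ => by dsimp only [w]; omega]
  obtain ⟨hU₁, hd₁⟩ := h.upperTriangular_blk_left (q + 1) (w := w) (by omega) rfl
  obtain ⟨hU₂, hd₂⟩ := h.upperTriangular_blk_right q (w := w) rfl hj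
  exact ⟨hU₁.mul hU₂, by rw [det_mul]; exact mul_ne_zero hd₁ hd₂⟩

end IsCMVFactor

/-- **Converse of the CMV factorization lemma.** If `G₁ = diag(G_{1,1}, …, G_{1,s})` and
`G₂ = diag(I_k, G_{2,2}, …, G_{2,s}, G_{2,s+1})` are block diagonal unitary matrices as in
the CMV factorization lemma, then `G = G₁ G₂` is a unitary matrix that is CMV structured
with block size `k`. -/
theorem cmv_factorization_converse (s k : ℕ)
    (G₁ G₂ : Matrix (Fin (2 * s * k)) (Fin (2 * s * k)) ℂ)
    (h : IsCMVFactor s k G₁ G₂) :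
    G₁ * G₂ ∈ Matrix.unitaryGroup (Fin (2 * s * k)) ℂ ∧ IsCMV s k (G₁ * G₂) := by
  refine ⟨mul_mem h.1 h.2.1, fun i j hij => h.blk_mul_eq_zero fun w _ _ => by omega,
    fun p _ _ => ?_, fun _ => ?_, fun p _ _ => ?_⟩
  · exact h.lowerTriangular_blk_mul (p - 1) (by dsimp only; omega) (by dsimp only; omega)
  · rw [h.blk_mul_eq_blk_left rfl rfl]
    exact h.upperTriangular_blk_left 0 rfl rfl
  · exact h.upperTriangular_blk_mul (p - 2) (by dsimp only; omega) (by dsimp only; omega)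
end

section
/- Let G ∈ ℂ^{n×n} be a unitary matrix that is CMV structured with block size k, with factorization G = G₁G₂ into block diagonal unitary factors as in the CMV factorization lemma, let Z ∈ ℂ^{n×k}, let E = [I_k; 0_{(n−k)×k}] ∈ ℂ^{n×k}, and set A = Gᵀ + E Z^H. Then A = G₂ᵀ (I_n + E Z̃^H) G₁ᵀ, where Z̃^H = Z^H · conj(G₁) (conj denoting the entrywise complex conjugate); moreover both G₁ᵀ and G₂ᵀ are unitary matrices with bandwidth k. -/
/-!
Transposing `G = G₁ G₂` gives `Gᵀ = G₂ᵀ G₁ᵀ`. The first rows of `G₂` are those of the identity,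
so `G₂ᵀ E = E`; and `conj(G₁) G₁ᵀ = (G₁ G₁ᴴ)ᵀ = I`. Hence
`E Zᴴ = G₂ᵀ E Zᴴ conj(G₁) G₁ᵀ`, which gives the factorization. A block diagonal matrix whose
diagonal blocks of size `2k` have bandwidth `k` has bandwidth `k` (the remaining blocks of `G₂`
have size `k`), and bandwidth and unitarity are preserved by transposition.
-/

open Matrix

/-- The `n × k` matrix `E = [I_k; 0]` whose top `k × k` block is the identity. -/
def EkM (n k : ℕ) : Matrix (Fin n) (Fin k) ℂ :=
  Matrix.of fun x j => if x.1 = j.1 then 1 else 0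

lemma Band.transpose {k m : ℕ} {M : Matrix (Fin m) (Fin m) ℂ} (h : Band k M) :
    Band k Mᵀ :=
  fun a b hab => h b a hab.symm

lemma apply_eq_zero_of_band_subsq {n m k r : ℕ} {M : Matrix (Fin n) (Fin n) ℂ}
    (hr : r + m ≤ n) (h : Band k (subsq M m r r hr hr)) {x y : Fin n}
    (hx : r ≤ x.1) (hxm : x.1 < r + m) (hy : r ≤ y.1) (hym : y.1 < r + m)
    (hxy : y.1 + k < x.1 ∨ x.1 + k < y.1) : M x y = 0 := by
  have := h ⟨x.1 - r, by omega⟩ ⟨y.1 - r, by omega⟩ (by dsimp only; omega)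
  simpa only [subsq, Matrix.of_apply, Nat.add_sub_cancel' hx, Nat.add_sub_cancel' hy]
    using this

lemma band_of_blockDiagonal {s k : ℕ} {M : Matrix (Fin (2 * s * k)) (Fin (2 * s * k)) ℂ}
    (hoff : ∀ x y : Fin (2 * s * k), x.1 / (2 * k) ≠ y.1 / (2 * k) → M x y = 0)
    (hblk : ∀ i : Fin s, Band k (subsq M (2 * k) (2 * i.1 * k) (2 * i.1 * k)
        (bnd_two (by omega)) (bnd_two (by omega)))) :
    Band k M := by
  intro x y hxy
  by_cases hsame : x.1 / (2 * k) = y.1 / (2 * k)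
  swap
  · exact hoff x y hsame
  have hk : 0 < 2 * k := Nat.pos_of_mul_pos_right (mul_right_comm 2 s k ▸ x.pos)
  have hxlo := Nat.div_mul_le_self x.1 (2 * k)
  have hxhi := Nat.lt_div_mul_add (a := x.1) hk
  have hylo := Nat.div_mul_le_self y.1 (2 * k)
  have hyhi := Nat.lt_div_mul_add (a := y.1) hk
  rw [← hsame] at hylo hyhi
  have hi : x.1 / (2 * k) < s := Nat.div_lt_of_lt_mul (by linarith [x.2])
  have hr : 2 * (x.1 / (2 * k)) * k = x.1 / (2 * k) * (2 * k) := by ring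
  exact apply_eq_zero_of_band_subsq _ (hblk ⟨_, hi⟩) (by dsimp only; omega)
    (by dsimp only; omega) (by dsimp only; omega) (by dsimp only; omega) hxy

lemma blkIdx2_eq_zero_iff {k x : ℕ} : blkIdx2 k x = 0 ↔ x < k := by
  unfold blkIdx2
  split_ifs with h <;> simp [h]

lemma blkIdx2_of_le {k x : ℕ} (h : k ≤ x) : blkIdx2 k x = (x - k) / (2 * k) + 1 :=
  if_neg (not_lt.2 h)

lemma band_of_blockDiagonal_shifted {s k : ℕ}
    {M : Matrix (Fin (2 * s * k)) (Fin (2 * s * k)) ℂ}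
    (hoff : ∀ x y : Fin (2 * s * k), blkIdx2 k x.1 ≠ blkIdx2 k y.1 → M x y = 0)
    (hblk : ∀ j : Fin (s - 1), Band k (subsq M (2 * k) ((2 * j.1 + 1) * k) ((2 * j.1 + 1) * k)
        (bnd_two (by omega)) (bnd_two (by omega)))) :
    Band k M := by
  intro x y hxy
  by_cases hsame : blkIdx2 k x.1 = blkIdx2 k y.1
  swap
  · exact hoff x y hsame
  -- the leading and trailing blocks have size `k`, too small to hold an entry outside the band
  have hxk : k ≤ x.1 := by
    by_contra! h
    have := blkIdx2_eq_zero_iff.1 (hsame ▸ blkIdx2_eq_zero_iff.2 h)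
    omega
  have hyk : k ≤ y.1 := by
    by_contra! h
    have := blkIdx2_eq_zero_iff.1 (hsame.symm ▸ blkIdx2_eq_zero_iff.2 h)
    omega
  rw [blkIdx2_of_le hxk, blkIdx2_of_le hyk, add_left_inj] at hsame
  have hk : 0 < 2 * k := Nat.pos_of_mul_pos_right (mul_right_comm 2 s k ▸ x.pos)
  have hxlo := Nat.div_mul_le_self (x.1 - k) (2 * k)
  have hxhi := Nat.lt_div_mul_add (a := x.1 - k) hk
  have hylo := Nat.div_mul_le_self (y.1 - k) (2 * k)
  have hyhi := Nat.lt_div_mul_add (a := y.1 - k) hk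
  rw [← hsame] at hylo hyhi
  by_cases hj : (x.1 - k) / (2 * k) < s - 1
  · have hr : (2 * ((x.1 - k) / (2 * k)) + 1) * k = (x.1 - k) / (2 * k) * (2 * k) + k := by
      ring
    exact apply_eq_zero_of_band_subsq _ (hblk ⟨_, hj⟩) (by dsimp only; omega)
      (by dsimp only; omega) (by dsimp only; omega) (by dsimp only; omega) hxy
  · have hlast : (s - 1) * (2 * k) ≤ (x.1 - k) / (2 * k) * (2 * k) :=
      Nat.mul_le_mul_right _ (by omega)
    have hn : 2 * s * k ≤ (s - 1) * (2 * k) + 2 * k :=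
      calc 2 * s * k = s * (2 * k) := by ring
        _ ≤ (s - 1 + 1) * (2 * k) := Nat.mul_le_mul_right _ (by omega)
        _ = (s - 1) * (2 * k) + 2 * k := Nat.succ_mul _ _
    have := x.2
    have := y.2
    omega

lemma transpose_mul_EkM {n k : ℕ} {M : Matrix (Fin n) (Fin n) ℂ}
    (hrows : ∀ x y : Fin n, x.1 < k → M x y = if x.1 = y.1 then 1 else 0) :
    Mᵀ * EkM n k = EkM n k := by
  ext x j
  conv_rhs => rw [← Matrix.one_mul (EkM n k)]
  simp only [Matrix.mul_apply]
  refine Finset.sum_congr rfl fun y _ => ?_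
  by_cases hy : y.1 = j.1
  · rw [Matrix.transpose_apply, hrows y x (hy ▸ j.2), Matrix.one_apply]
    simp only [Fin.ext_iff, eq_comm]
  · simp [EkM, hy]

lemma map_star_mul_transpose_of_mem_unitaryGroup {n : ℕ} {U : Matrix (Fin n) (Fin n) ℂ}
    (hU : U ∈ Matrix.unitaryGroup (Fin n) ℂ) : U.map star * Uᵀ = 1 := by
  rw [← Matrix.conjTranspose_transpose, ← Matrix.transpose_mul, ← Matrix.star_eq_conjTranspose,
    Matrix.mem_unitaryGroup_iff.1 hU, Matrix.transpose_one]

theorem cmv_transpose_LFR_general (s k : ℕ)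
    (G G₁ G₂ : Matrix (Fin (2 * s * k)) (Fin (2 * s * k)) ℂ)
    (hfac : IsCMVFactor s k G₁ G₂) (hprod : G = G₁ * G₂)
    (Z : Matrix (Fin (2 * s * k)) (Fin k) ℂ)
    (A : Matrix (Fin (2 * s * k)) (Fin (2 * s * k)) ℂ)
    (hA : A = G.transpose + EkM (2 * s * k) k * Z.conjTranspose) :
    A = G₂.transpose *
          (1 + EkM (2 * s * k) k * (Z.conjTranspose * G₁.map (starRingEnd ℂ))) *
        G₁.transpose ∧
    G₁.transpose ∈ Matrix.unitaryGroup (Fin (2 * s * k)) ℂ ∧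
    Band k G₁.transpose ∧
    G₂.transpose ∈ Matrix.unitaryGroup (Fin (2 * s * k)) ℂ ∧
    Band k G₂.transpose := by
  obtain ⟨hG₁, hG₂, hG₁off, hG₁blk, hG₂off, hG₂id, hG₂blk, -⟩ := hfac
  have hG₂rows : ∀ x y : Fin (2 * s * k), x.1 < k → G₂ x y = if x.1 = y.1 then 1 else 0 := by
    intro x y hx
    by_cases hy : y.1 < k
    · exact hG₂id x y hx hy
    · rw [if_neg (by omega)]
      exact hG₂off x y (by rwa [blkIdx2_eq_zero_iff.2 hx, ne_comm, Ne, blkIdx2_eq_zero_iff])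
  refine ⟨?_, Matrix.transpose_mem_unitaryGroup_iff.2 hG₁,
    (band_of_blockDiagonal hG₁off fun i => (hG₁blk i).2.1).transpose,
    Matrix.transpose_mem_unitaryGroup_iff.2 hG₂,
    (band_of_blockDiagonal_shifted hG₂off fun j => (hG₂blk j).2.1).transpose⟩
  calc A = G₂ᵀ * G₁ᵀ + G₂ᵀ * EkM (2 * s * k) k * Zᴴ * (G₁.map star * G₁ᵀ) := by
        rw [hA, hprod, Matrix.transpose_mul, transpose_mul_EkM hG₂rows,
          map_star_mul_transpose_of_mem_unitaryGroup hG₁, Matrix.mul_one]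
    _ = _ := by
        simp only [Matrix.mul_add, Matrix.add_mul, Matrix.mul_one, Matrix.mul_assoc]
        rfl

/-- If `G` is a unitary CMV structured matrix with block size `k`, factored as
`G = G₁ G₂` according to the CMV factorization lemma, and `A = Gᵀ + E Z^H` with
`E = [I_k; 0]`, then `A = G₂ᵀ (I + E Z̃^H) G₁ᵀ` where `Z̃^H = Z^H · conj(G₁)`;
moreover `G₁ᵀ` and `G₂ᵀ` are unitary matrices with bandwidth `k`. -/
theorem cmv_transpose_LFR (s k : ℕ)
    (G G₁ G₂ : Matrix (Fin (2 * s * k)) (Fin (2 * s * k)) ℂ)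
    (hGu : G ∈ Matrix.unitaryGroup (Fin (2 * s * k)) ℂ) (hG : IsCMV s k G)
    (hfac : IsCMVFactor s k G₁ G₂) (hprod : G = G₁ * G₂)
    (Z : Matrix (Fin (2 * s * k)) (Fin k) ℂ)
    (A : Matrix (Fin (2 * s * k)) (Fin (2 * s * k)) ℂ)
    (hA : A = G.transpose + EkM (2 * s * k) k * Z.conjTranspose) :
    A = G₂.transpose *
          (1 + EkM (2 * s * k) k * (Z.conjTranspose * G₁.map (starRingEnd ℂ))) *
        G₁.transpose ∧
    G₁.transpose ∈ Matrix.unitaryGroup (Fin (2 * s * k)) ℂ ∧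
    Band k G₁.transpose ∧
    G₂.transpose ∈ Matrix.unitaryGroup (Fin (2 * s * k)) ℂ ∧
    Band k G₂.transpose :=
  cmv_transpose_LFR_general s k G G₁ G₂ hfac hprod Z A hA
end

section
/- Let n = mk and let H ∈ ℂ^{n×n} be a unitary block upper Hessenberg matrix with k×k blocks (i.e. its k×k blocks H_{ij} satisfy H_{ij} = 0 whenever i > j+1). Let Z ∈ ℂ^{n×k}, E = [I_k; 0_{(n−k)×k}], and A = H + E Z^H. Then there exists a unitary block diagonal matrix P = diag(P₁, P₂, ..., P_m) with P₁ = I_k and each Pᵢ ∈ ℂ^{k×k} unitary, such that H̃ := P^H H P is a unitary k-upper Hessenberg matrix (entries h̃_{ij} = 0 for i > j+k) and P^H A P = (I_n + E Ẑ^H) H̃, where Ẑ^H = Z^H P H̃^H. -/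
open Matrix

/-!
Take `P₁ = I` and, inductively, `P_{i+1}` the unitary factor of a QR decomposition of
`H_{i+1,i} P_i`. The blocks `P_iᴴ H_{ij} P_j` of `H̃ = Pᴴ H P` then vanish below the first block
subdiagonal and are upper triangular on it, which is exactly the `k`-upper Hessenberg pattern.
Since `P₁ = I` we have `Pᴴ E = E`, so `Pᴴ (E Zᴴ) P = E Zᴴ P = E Zᴴ P H̃ᴴ H̃` by unitarity of `H̃`.
-/

namespace Matrix

section QR

variable {𝕜 ι : Type*} [RCLike 𝕜] [Fintype ι] [DecidableEq ι] [LinearOrder ι]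
  [LocallyFiniteOrderBot ι]

/-- QR decomposition; the unitary factor comes from Gram–Schmidt on the columns of `M`. -/
theorem exists_mem_unitaryGroup_isUpperTriangular_conjTranspose_mul (M : Matrix ι ι 𝕜) :
    ∃ Q ∈ unitaryGroup ι 𝕜, (Qᴴ * M).IsUpperTriangular := by
  let b := EuclideanSpace.basisFun ι 𝕜
  let cols : ι → EuclideanSpace 𝕜 ι := fun j => WithLp.toLp 2 fun i => M i j
  let g := InnerProductSpace.gramSchmidtOrthonormalBasis finrank_euclideanSpace cols
  have hQ := b.toMatrix_orthonormalBasis_mem_unitary g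
  refine ⟨b.toBasis.toMatrix g, hQ, ?_⟩
  have hM : b.toBasis.toMatrix g * g.toBasis.toMatrix cols = M := by
    rw [← g.coe_toBasis, Module.Basis.toMatrix_mul_toMatrix]
    rfl
  rw [← hM, ← Matrix.mul_assoc, ← star_eq_conjTranspose, Unitary.star_mul_self_of_mem hQ,
    Matrix.one_mul]
  exact InnerProductSpace.gramSchmidtOrthonormalBasis_inv_isUpperTriangular _ cols

noncomputable def qrChain (B : ℕ → Matrix ι ι 𝕜) : ℕ → Matrix ι ι 𝕜
  | 0 => 1
  | j + 1 =>
    (exists_mem_unitaryGroup_isUpperTriangular_conjTranspose_mul (B j * qrChain B j)).choose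

theorem qrChain_mem_unitaryGroup (B : ℕ → Matrix ι ι 𝕜) : ∀ j, qrChain B j ∈ unitaryGroup ι 𝕜
  | 0 => one_mem _
  | j + 1 =>
    (exists_mem_unitaryGroup_isUpperTriangular_conjTranspose_mul (B j * qrChain B j)).choose_spec.1

theorem isUpperTriangular_qrChain (B : ℕ → Matrix ι ι 𝕜) (j : ℕ) :
    ((qrChain B (j + 1))ᴴ * B j * qrChain B j).IsUpperTriangular := by
  rw [Matrix.mul_assoc]
  exact
    (exists_mem_unitaryGroup_isUpperTriangular_conjTranspose_mul (B j * qrChain B j)).choose_spec.2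

end QR

section BlockDiagonal

variable {α ι o : Type*}

theorem conjTranspose_blockDiagonal_mul_mul_blockDiagonal_apply [Fintype ι] [Fintype o]
    [DecidableEq o] [Semiring α] [StarRing α] (Q : o → Matrix ι ι α)
    (M : Matrix (ι × o) (ι × o) α) (c d : ι) (i j : o) :
    ((blockDiagonal Q)ᴴ * M * blockDiagonal Q) (c, i) (d, j) =
      ((Q i)ᴴ * of (fun a b => M (a, i) (b, j)) * Q j) c d := by
  simp only [mul_apply, conjTranspose_apply, blockDiagonal_apply, of_apply,
    ← Finset.univ_product_univ, Finset.sum_product]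
  simp only [apply_ite (star : α → α), star_zero, ite_mul, mul_ite, zero_mul, mul_zero,
    Finset.sum_ite_eq', Finset.mem_univ, if_true]

theorem blockDiagonal_mem_unitaryGroup [Fintype ι] [DecidableEq ι] [Fintype o] [DecidableEq o]
    [CommRing α] [StarRing α] {Q : o → Matrix ι ι α} (hQ : ∀ i, Q i ∈ unitaryGroup ι α) :
    blockDiagonal Q ∈ unitaryGroup (ι × o) α := by
  rw [mem_unitaryGroup_iff', star_eq_conjTranspose, blockDiagonal_conjTranspose,
    ← blockDiagonal_mul, ← blockDiagonal_one]
  congr 1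
  funext i
  exact Unitary.star_mul_self_of_mem (hQ i)

theorem submatrix_mem_unitaryGroup [Fintype ι] [DecidableEq ι] [Fintype o] [DecidableEq o]
    [CommRing α] [StarRing α] {U : Matrix ι ι α} (hU : U ∈ unitaryGroup ι α) (e : o ≃ ι) :
    U.submatrix e e ∈ unitaryGroup o α := by
  rw [mem_unitaryGroup_iff', star_eq_conjTranspose, conjTranspose_submatrix, submatrix_mul_equiv,
    ← star_eq_conjTranspose, Unitary.star_mul_self_of_mem hU, submatrix_one_equiv]

end BlockDiagonal

theorem exists_blockDiagonal_conj_eq_zero_of_blockHessenberg {𝕜 ι : Type*} [RCLike 𝕜] [Fintype ι]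
    [DecidableEq ι] [LinearOrder ι] [LocallyFiniteOrderBot ι] {m : ℕ}
    (M : Matrix (ι × Fin m) (ι × Fin m) 𝕜)
    (hM : ∀ a b (i j : Fin m), (j : ℕ) + 1 < i → M (a, i) (b, j) = 0) :
    ∃ Q : Fin m → Matrix ι ι 𝕜, (∀ i, Q i ∈ unitaryGroup ι 𝕜) ∧
      (∀ i : Fin m, (i : ℕ) = 0 → Q i = 1) ∧
      ∀ p q : ι × Fin m, (q.2 : ℕ) + 1 < p.2 ∨ ((p.2 : ℕ) = q.2 + 1 ∧ q.1 < p.1) →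
        ((blockDiagonal Q)ᴴ * M * blockDiagonal Q) p q = 0 := by
  let subdiagonal : ℕ → Matrix ι ι 𝕜 := fun j =>
    if h : j + 1 < m then of fun a b => M (a, ⟨j + 1, h⟩) (b, ⟨j, by omega⟩) else 0
  refine ⟨fun i => qrChain subdiagonal i, fun i => qrChain_mem_unitaryGroup _ i,
    fun i hi => by simp only [hi]; rfl, ?_⟩
  rintro ⟨c, i, hi⟩ ⟨d, j, hj⟩ (hij | ⟨rfl, hdc⟩) <;>
    rw [conjTranspose_blockDiagonal_mul_mul_blockDiagonal_apply]
  · have hblock : of (fun a b => M (a, ⟨i, hi⟩) (b, ⟨j, hj⟩)) = 0 := by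
      ext a b
      exact hM a b _ _ hij
    simp [hblock]
  · have hblock : of (fun a b => M (a, ⟨j + 1, hi⟩) (b, ⟨j, hj⟩)) = subdiagonal j := by
      simp [subdiagonal, hi]
    rw [hblock]
    exact isUpperTriangular_qrChain subdiagonal j hdc

theorem conj_add_mul_conjTranspose_eq {n κ α : Type*} [Fintype n] [DecidableEq n] [Fintype κ]
    [CommRing α] [StarRing α] {P H : Matrix n n α} {E Z : Matrix n κ α}
    (hHt : Pᴴ * H * P ∈ unitaryGroup n α) (hPE : Pᴴ * E = E) :
    Pᴴ * (H + E * Zᴴ) * P = (1 + E * (Zᴴ * P * (Pᴴ * H * P)ᴴ)) * (Pᴴ * H * P) := by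
  rw [Matrix.mul_add, Matrix.add_mul, Matrix.add_mul, Matrix.one_mul, ← Matrix.mul_assoc Pᴴ E, hPE,
    Matrix.mul_assoc E, Matrix.mul_assoc E (Zᴴ * P * _), Matrix.mul_assoc (Zᴴ * P),
    ← star_eq_conjTranspose (Pᴴ * H * P), Unitary.star_mul_self_of_mem hHt, Matrix.mul_one]

end Matrix

theorem Nat.div_add_one_lt_div_or_of_add_lt {k x y : ℕ} (hk : 0 < k) (h : y + k < x) :
    y / k + 1 < x / k ∨ (x / k = y / k + 1 ∧ y % k < x % k) := by
  have hdiv : y / k + 1 ≤ x / k := by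
    rw [← Nat.add_div_right y hk]
    exact Nat.div_le_div_right h.le
  rcases hdiv.lt_or_eq with hlt | heq
  · exact Or.inl hlt
  · refine Or.inr ⟨heq.symm, ?_⟩
    have hx := Nat.div_add_mod x k
    have hy := Nat.div_add_mod y k
    rw [← heq, Nat.mul_succ] at hx
    omega

section FinBlocks

variable {m k : ℕ}

def blockEquiv (m k : ℕ) : Fin k × Fin m ≃ Fin (m * k) :=
  (Equiv.prodComm _ _).trans finProdFinEquiv

theorem blockEquiv_apply_val (p : Fin k × Fin m) : (blockEquiv m k p : ℕ) = p.1 + k * p.2 := rfl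

theorem blockEquiv_symm_apply_fst_val (x : Fin (m * k)) :
    (((blockEquiv m k).symm x).1 : ℕ) = x % k := by
  simp [blockEquiv]

theorem blockEquiv_symm_apply_snd_val (x : Fin (m * k)) :
    (((blockEquiv m k).symm x).2 : ℕ) = x / k := by
  simp [blockEquiv]

theorem blockEquiv_apply_val_div (p : Fin k × Fin m) : (blockEquiv m k p : ℕ) / k = p.2 := by
  rw [← blockEquiv_symm_apply_snd_val, Equiv.symm_apply_apply]

variable {α : Type*}

def finBlockDiagonal [Zero α] (Q : Fin m → Matrix (Fin k) (Fin k) α) :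
    Matrix (Fin (m * k)) (Fin (m * k)) α :=
  (blockDiagonal Q).submatrix (blockEquiv m k).symm (blockEquiv m k).symm

theorem finBlockDiagonal_apply_of_div_ne [Zero α] (Q : Fin m → Matrix (Fin k) (Fin k) α)
    {x y : Fin (m * k)} (h : (x : ℕ) / k ≠ y / k) : finBlockDiagonal Q x y = 0 := by
  rw [finBlockDiagonal, submatrix_apply, blockDiagonal_apply, if_neg]
  rwa [Fin.ext_iff, blockEquiv_symm_apply_snd_val, blockEquiv_symm_apply_snd_val]

theorem finBlockDiagonal_apply_blockEquiv [Zero α] (Q : Fin m → Matrix (Fin k) (Fin k) α)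
    (a b : Fin k) (i : Fin m) :
    finBlockDiagonal Q (blockEquiv m k (a, i)) (blockEquiv m k (b, i)) = Q i a b := by
  simp [finBlockDiagonal, blockDiagonal_apply_eq]

theorem finBlockDiagonal_apply_of_lt [Zero α] [One α] (Q : Fin m → Matrix (Fin k) (Fin k) α)
    (hQ : ∀ i : Fin m, (i : ℕ) = 0 → Q i = 1) {x y : Fin (m * k)} (hx : (x : ℕ) < k)
    (hy : (y : ℕ) < k) : finBlockDiagonal Q x y = if (x : ℕ) = y then 1 else 0 := by
  have hx0 : (((blockEquiv m k).symm x).2 : ℕ) = 0 := by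
    rw [blockEquiv_symm_apply_snd_val, Nat.div_eq_of_lt hx]
  have hyx : ((blockEquiv m k).symm y).2 = ((blockEquiv m k).symm x).2 := Fin.ext <| by
    rw [blockEquiv_symm_apply_snd_val, blockEquiv_symm_apply_snd_val, Nat.div_eq_of_lt hx,
      Nat.div_eq_of_lt hy]
  rw [finBlockDiagonal, submatrix_apply, ← Prod.mk.eta (p := (blockEquiv m k).symm x),
    ← Prod.mk.eta (p := (blockEquiv m k).symm y), hyx, blockDiagonal_apply_eq, hQ _ hx0, one_apply]
  simp only [Fin.ext_iff, blockEquiv_symm_apply_fst_val, Nat.mod_eq_of_lt hx, Nat.mod_eq_of_lt hy]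

theorem finBlockDiagonal_mem_unitaryGroup [CommRing α] [StarRing α]
    {Q : Fin m → Matrix (Fin k) (Fin k) α} (hQ : ∀ i, Q i ∈ unitaryGroup (Fin k) α) :
    finBlockDiagonal Q ∈ unitaryGroup (Fin (m * k)) α :=
  submatrix_mem_unitaryGroup (blockDiagonal_mem_unitaryGroup hQ) _

theorem conjTranspose_finBlockDiagonal_mul_mul [Semiring α] [StarRing α]
    (Q : Fin m → Matrix (Fin k) (Fin k) α) (M : Matrix (Fin (m * k)) (Fin (m * k)) α) :
    (finBlockDiagonal Q)ᴴ * M * finBlockDiagonal Q =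
      ((blockDiagonal Q)ᴴ * M.submatrix (blockEquiv m k) (blockEquiv m k) *
        blockDiagonal Q).submatrix (blockEquiv m k).symm (blockEquiv m k).symm := by
  have hM : M = (M.submatrix (blockEquiv m k) (blockEquiv m k)).submatrix (blockEquiv m k).symm
      (blockEquiv m k).symm := by
    simp [submatrix_submatrix]
  conv_lhs => rw [hM]
  rw [finBlockDiagonal, conjTranspose_submatrix, submatrix_mul_equiv, submatrix_mul_equiv]

theorem subsq_finBlockDiagonal (Q : Fin m → Matrix (Fin k) (Fin k) ℂ) (i : Fin m)
    (hr : i * k + k ≤ m * k) (hc : i * k + k ≤ m * k) :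
    subsq (finBlockDiagonal Q) k (i * k) (i * k) hr hc = Q i := by
  have hidx (a : Fin k) : (⟨i * k + a, by omega⟩ : Fin (m * k)) = blockEquiv m k (a, i) :=
    Fin.ext <| by rw [blockEquiv_apply_val]; ring
  ext a b
  simp only [subsq, of_apply, hidx, finBlockDiagonal_apply_blockEquiv]

theorem finBlockDiagonal_mul_EkM (Q : Fin m → Matrix (Fin k) (Fin k) ℂ)
    (hQ : ∀ i : Fin m, (i : ℕ) = 0 → Q i = 1) :
    finBlockDiagonal Q * EkM (m * k) k = EkM (m * k) k := by
  ext x j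
  have hj : (j : ℕ) < m * k :=
    j.2.trans_le (Nat.le_mul_of_pos_left k ((blockEquiv m k).symm x).2.pos)
  rw [mul_apply, Finset.sum_eq_single ⟨j, hj⟩]
  · simp only [EkM, of_apply, if_true, mul_one]
    by_cases hx : (x : ℕ) < k
    · exact finBlockDiagonal_apply_of_lt Q hQ hx j.2
    · have hxj : (x : ℕ) ≠ j := by omega
      rw [finBlockDiagonal_apply_of_div_ne Q, if_neg hxj]
      rw [Nat.div_eq_of_lt j.2]
      exact (Nat.div_pos (not_lt.1 hx) j.pos).ne'
  · intro z _ hz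
    have hzj : (z : ℕ) ≠ j := fun h => hz (Fin.ext h)
    simp [EkM, hzj]
  · simp

end FinBlocks

/-- **Reduction of a perturbed unitary block Hessenberg matrix.**
Let `n = mk` and let `H` be a unitary block upper Hessenberg matrix with `k × k` blocks
(`H_{ij} = 0` for `i > j + 1`, blockwise). Let `A = H + E Z^H` with `E = [I_k; 0]`.
Then there is a unitary block diagonal matrix `P = diag(P₁, …, P_m)` with `P₁ = I_k`
and each `Pᵢ` unitary `k × k`, such that `H̃ = P^H H P` is a unitary `k`-upper
Hessenberg matrix and `P^H A P = (I + E Ẑ^H) H̃` with `Ẑ^H = Z^H P H̃^H`. -/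
theorem block_hessenberg_reduction (m k : ℕ)
    (H : Matrix (Fin (m * k)) (Fin (m * k)) ℂ)
    (hHu : H ∈ Matrix.unitaryGroup (Fin (m * k)) ℂ)
    (hH : ∀ x y : Fin (m * k), y.1 / k + 1 < x.1 / k → H x y = 0)
    (Z : Matrix (Fin (m * k)) (Fin k) ℂ)
    (A : Matrix (Fin (m * k)) (Fin (m * k)) ℂ)
    (hA : A = H + EkM (m * k) k * Z.conjTranspose) :
    ∃ P : Matrix (Fin (m * k)) (Fin (m * k)) ℂ,
      P ∈ Matrix.unitaryGroup (Fin (m * k)) ℂ ∧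
      -- `P` is block diagonal with `k × k` diagonal blocks
      (∀ x y : Fin (m * k), x.1 / k ≠ y.1 / k → P x y = 0) ∧
      -- `P₁ = I_k`
      (∀ x y : Fin (m * k), x.1 < k → y.1 < k → P x y = if x.1 = y.1 then 1 else 0) ∧
      -- each diagonal block `Pᵢ` is unitary
      (∀ i : Fin m,
        subsq P k (i.1 * k) (i.1 * k) (bnd_one (by omega)) (bnd_one (by omega))
          ∈ Matrix.unitaryGroup (Fin k) ℂ) ∧
      -- `H̃ = P^H H P` is a unitary `k`-upper Hessenberg matrix
      P.conjTranspose * H * P ∈ Matrix.unitaryGroup (Fin (m * k)) ℂ ∧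
      (∀ x y : Fin (m * k), y.1 + k < x.1 → (P.conjTranspose * H * P) x y = 0) ∧
      -- `P^H A P = (I + E Ẑ^H) H̃` with `Ẑ^H = Z^H P H̃^H`
      P.conjTranspose * A * P =
        (1 + EkM (m * k) k *
            (Z.conjTranspose * P * (P.conjTranspose * H * P).conjTranspose)) *
          (P.conjTranspose * H * P) := by
  obtain ⟨Q, hQu, hQ₀, hQH⟩ := exists_blockDiagonal_conj_eq_zero_of_blockHessenberg
    (H.submatrix (blockEquiv m k) (blockEquiv m k))
    fun a b i j hij => hH _ _ (by rwa [blockEquiv_apply_val_div, blockEquiv_apply_val_div])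
  have hPu := finBlockDiagonal_mem_unitaryGroup hQu
  have hHtu : (finBlockDiagonal Q)ᴴ * H * finBlockDiagonal Q ∈ unitaryGroup (Fin (m * k)) ℂ :=
    mul_mem (mul_mem (Unitary.star_mem hPu) hHu) hPu
  have hPE : (finBlockDiagonal Q)ᴴ * EkM (m * k) k = EkM (m * k) k := by
    conv_lhs => rw [← finBlockDiagonal_mul_EkM Q hQ₀]
    rw [← Matrix.mul_assoc, ← star_eq_conjTranspose, Unitary.star_mul_self_of_mem hPu,
      Matrix.one_mul]
  refine ⟨finBlockDiagonal Q, hPu, fun x y => finBlockDiagonal_apply_of_div_ne Q,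
    fun x y => finBlockDiagonal_apply_of_lt Q hQ₀, fun i => ?_, hHtu, fun x y hxy => ?_,
    hA ▸ conj_add_mul_conjTranspose_eq hHtu hPE⟩
  · rw [subsq_finBlockDiagonal]
    exact hQu i
  · rw [conjTranspose_finBlockDiagonal_mul_mul, submatrix_apply]
    refine hQH _ _ ?_
    simpa only [blockEquiv_symm_apply_fst_val, blockEquiv_symm_apply_snd_val, Fin.lt_def] using
      Nat.div_add_one_lt_div_or_of_add_lt ((blockEquiv m k).symm x).1.pos hxy
end

section
/- Let A ∈ ℂ^{n×n} be given by A = L(I_n + E Z^H)R, where L, R ∈ ℂ^{n×n} are unitary, Z ∈ ℂ^{n×k}, and E = [I_k; 0_{(n−k)×k}]. Let Z = QG be an economic QR factorization of Z (Q ∈ ℂ^{n×k} with Q^H Q = I_k, G ∈ ℂ^{k×k} upper triangular). Set m = n + k, X = [Q; −I_k] ∈ ℂ^{m×k}, and Û = I_m − X X^H. Then: (1) Û is unitary; and (2) the matrix Â = diag(L, I_k) · ( Û + ([G^H; 0_{n×k}] + X) · [Q; 0_{k×k}]^H ) · diag(R, I_k) ∈ ℂ^{m×m} satisfies Â = [[A,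 B], [0_{k×n}, 0_{k×k}]] for some B ∈ ℂ^{n×k}; that is, the last k rows of Â are zero and the leading n×n principal submatrix of Â equals A. -/
/-!
Reindex `Fin (n + k)` as `Fin n ⊕ Fin k` to read every matrix in `2 × 2` block form. Then
`X = [Q; -I]` satisfies `Xᴴ X = Qᴴ Q + I = 2 I`, so `Û = I - X Xᴴ` is a Hermitian involution,
hence unitary. Since `[Gᴴ; 0] = [E Gᴴ; 0]` (this needs `k ≤ n`, forced by `Qᴴ Q = I_k`), the
middle factor of `Â` is
`[[I - Q Qᴴ + (E Gᴴ + Q) Qᴴ, Q], [Qᴴ - Qᴴ, 0]] = [[I + E Zᴴ, Q], [0, 0]]`,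
and the outer factors `diag(L, I)`, `diag(R, I)` turn it into `[[A, L Q], [0, 0]]`.
-/

open Matrix

/-- Vertical stacking `[A; B]` of an `n × k` matrix on top of a `k × k` matrix. -/
def stackM (n k : ℕ) (A : Matrix (Fin n) (Fin k) ℂ) (B : Matrix (Fin k) (Fin k) ℂ) :
    Matrix (Fin (n + k)) (Fin k) ℂ :=
  Matrix.of fun x j => if h : x.1 < n then A ⟨x.1, h⟩ j else B ⟨x.1 - n, by omega⟩ j

/-- The `(n+k) × k` matrix `[M; 0]` with `M ∈ ℂ^{k×k}` in the first `k` rows and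
zeros in the remaining `n` rows. -/
def topM (n k : ℕ) (M : Matrix (Fin k) (Fin k) ℂ) : Matrix (Fin (n + k)) (Fin k) ℂ :=
  Matrix.of fun x j => if h : x.1 < k then M ⟨x.1, h⟩ j else 0

/-- The block diagonal matrix `diag(L, I_k)` for `L ∈ ℂ^{n×n}`. -/
def diagLI (n k : ℕ) (L : Matrix (Fin n) (Fin n) ℂ) :
    Matrix (Fin (n + k)) (Fin (n + k)) ℂ :=
  Matrix.of fun x y =>
    if h : x.1 < n then (if h' : y.1 < n then L ⟨x.1, h⟩ ⟨y.1, h'⟩ else 0)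
    else if x.1 = y.1 then 1 else 0

/-- The matrix `X = [Q; −I_k]`. -/
def XM (n k : ℕ) (Q : Matrix (Fin n) (Fin k) ℂ) : Matrix (Fin (n + k)) (Fin k) ℂ :=
  stackM n k Q (-1)

/-- The matrix `Û = I_m − X X^H`, with `X = [Q; −I_k]` and `m = n + k`. -/
noncomputable def UhatM (n k : ℕ) (Q : Matrix (Fin n) (Fin k) ℂ) :
    Matrix (Fin (n + k)) (Fin (n + k)) ℂ :=
  1 - XM n k Q * (XM n k Q).conjTranspose

/-- The embedded matrix
`Â = diag(L, I_k) · (Û + ([G^H; 0] + X) · [Q; 0]^H) · diag(R, I_k)`. -/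
noncomputable def AhatM (n k : ℕ) (L R : Matrix (Fin n) (Fin n) ℂ)
    (Q : Matrix (Fin n) (Fin k) ℂ) (G : Matrix (Fin k) (Fin k) ℂ) :
    Matrix (Fin (n + k)) (Fin (n + k)) ℂ :=
  diagLI n k L *
    (UhatM n k Q +
      (topM n k G.conjTranspose + XM n k Q) * (stackM n k Q 0).conjTranspose) *
    diagLI n k R

namespace Matrix

theorem card_le_card_of_mul_eq_one {m r R : Type*} [Fintype m] [Fintype r] [DecidableEq r]
    [CommRing R] [StrongRankCondition R] {A : Matrix m r R} {B : Matrix r m R}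
    (h : B * A = 1) : Fintype.card r ≤ Fintype.card m :=
  calc Fintype.card r = (B * A).rank := by rw [h, rank_one]
    _ ≤ B.rank := rank_mul_le_left B A
    _ ≤ Fintype.card m := rank_le_card_width B

theorem one_sub_mul_conjTranspose_mem_unitaryGroup {m r R : Type*} [Fintype m] [DecidableEq m]
    [Fintype r] [DecidableEq r] [CommRing R] [StarRing R] {X : Matrix m r R}
    (hX : Xᴴ * X = 2) : 1 - X * Xᴴ ∈ unitaryGroup m R := by
  have hsq : X * Xᴴ * (X * Xᴴ) = X * Xᴴ + X * Xᴴ := by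
    rw [Matrix.mul_assoc, ← Matrix.mul_assoc Xᴴ, hX, ← one_add_one_eq_two, Matrix.add_mul,
      Matrix.mul_add, Matrix.one_mul]
  rw [mem_unitaryGroup_iff, star_eq_conjTranspose, conjTranspose_sub, conjTranspose_one,
    conjTranspose_mul, conjTranspose_conjTranspose, sub_mul, mul_sub, mul_sub, hsq]
  simp only [Matrix.one_mul, Matrix.mul_one]
  abel

theorem submatrix_mul_conjTranspose {l m r α : Type*} [Fintype r] [NonUnitalNonAssocSemiring α]
    [Star α] (P N : Matrix m r α) (e : l → m) :
    (P * Nᴴ).submatrix e e = P.submatrix e id * (N.submatrix e id)ᴴ := by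
  rw [conjTranspose_submatrix]
  exact (submatrix_mul_equiv P Nᴴ e (.refl r) e).symm

theorem conjTranspose_mul_self_submatrix_equiv {l m r α : Type*} [Fintype l] [Fintype m]
    [NonUnitalNonAssocSemiring α] [Star α] (A : Matrix m r α) (e : l ≃ m) :
    (A.submatrix e id)ᴴ * A.submatrix e id = Aᴴ * A := by
  rw [conjTranspose_submatrix, submatrix_mul_equiv, submatrix_id_id]

section FinSumFin

variable {n k : ℕ} {α : Type*} {M : Matrix (Fin (n + k)) (Fin (n + k)) α}

theorem apply_eq_zero_of_submatrix_finSumFinEquiv_eq_fromBlocks [Zero α]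
    {A : Matrix (Fin n) (Fin n) α} {B : Matrix (Fin n) (Fin k) α}
    (h : M.submatrix finSumFinEquiv finSumFinEquiv = fromBlocks A B 0 0)
    (x y : Fin (n + k)) (hx : n ≤ x.1) : M x y = 0 := by
  obtain ⟨i, rfl⟩ : ∃ i : Fin k, Fin.natAdd n i = x :=
    ⟨⟨x.1 - n, by omega⟩, by ext; simp; omega⟩
  obtain ⟨j, rfl⟩ := finSumFinEquiv.surjective y
  cases j with
  | inl j => simpa using congr_fun₂ h (.inr i) (.inl j)
  | inr j => simpa using congr_fun₂ h (.inr i) (.inr j)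

theorem apply_eq_of_submatrix_finSumFinEquiv_eq_fromBlocks
    {A : Matrix (Fin n) (Fin n) α} {B : Matrix (Fin n) (Fin k) α} {C : Matrix (Fin k) (Fin n) α}
    {D : Matrix (Fin k) (Fin k) α}
    (h : M.submatrix finSumFinEquiv finSumFinEquiv = fromBlocks A B C D) (x y : Fin n) :
    M (Fin.castAdd k x) (Fin.castAdd k y) = A x y :=
  congr_fun₂ h (.inl x) (.inl y)

end FinSumFin

end Matrix

section Blocks

variable {n k : ℕ}

theorem stackM_submatrix_finSumFinEquiv (P : Matrix (Fin n) (Fin k) ℂ)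
    (B : Matrix (Fin k) (Fin k) ℂ) :
    (stackM n k P B).submatrix finSumFinEquiv id = fromRows P B := by
  ext (i | i) j <;> simp [stackM]

theorem EkM_mul_apply (M : Matrix (Fin k) (Fin k) ℂ) (i : Fin n) (j : Fin k) :
    (EkM n k * M) i j = if h : i.1 < k then M ⟨i.1, h⟩ j else 0 := by
  rw [mul_apply]
  split_ifs with h
  · refine (Finset.sum_eq_single ⟨i.1, h⟩ (fun b _ hb => ?_) (by simp)).trans (by simp [EkM])
    simp [EkM, show i.1 ≠ b.1 from fun e => hb (Fin.ext e.symm)]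
  · exact Finset.sum_eq_zero fun b _ => by simp [EkM, show i.1 ≠ b.1 by omega]

theorem topM_submatrix_finSumFinEquiv (hkn : k ≤ n) (M : Matrix (Fin k) (Fin k) ℂ) :
    (topM n k M).submatrix finSumFinEquiv id = fromRows (EkM n k * M) 0 := by
  ext (i | i) j
  · simp [topM, EkM_mul_apply]
  · simp [topM, show ¬ n + i.1 < k by omega]

theorem diagLI_submatrix_finSumFinEquiv (L : Matrix (Fin n) (Fin n) ℂ) :
    (diagLI n k L).submatrix finSumFinEquiv finSumFinEquiv = fromBlocks L 0 0 1 := by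
  ext (i | i) (j | j) <;> simp [diagLI, one_apply, Fin.ext_iff]
  omega

theorem XM_submatrix_finSumFinEquiv (Q : Matrix (Fin n) (Fin k) ℂ) :
    (XM n k Q).submatrix finSumFinEquiv id = fromRows Q (-1) :=
  stackM_submatrix_finSumFinEquiv Q (-1)

theorem conjTranspose_XM_mul_XM {Q : Matrix (Fin n) (Fin k) ℂ} (hQ : Qᴴ * Q = 1) :
    (XM n k Q)ᴴ * XM n k Q = 2 := by
  rw [← conjTranspose_mul_self_submatrix_equiv _ finSumFinEquiv, XM_submatrix_finSumFinEquiv,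
    conjTranspose_fromRows_eq_fromCols_conjTranspose, fromCols_mul_fromRows, hQ]
  simp [one_add_one_eq_two]

theorem UhatM_mem_unitaryGroup {Q : Matrix (Fin n) (Fin k) ℂ} (hQ : Qᴴ * Q = 1) :
    UhatM n k Q ∈ unitaryGroup (Fin (n + k)) ℂ :=
  one_sub_mul_conjTranspose_mem_unitaryGroup (conjTranspose_XM_mul_XM hQ)

theorem UhatM_add_mul_submatrix_finSumFinEquiv (hkn : k ≤ n) (Q : Matrix (Fin n) (Fin k) ℂ)
    (G : Matrix (Fin k) (Fin k) ℂ) :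
    (UhatM n k Q + (topM n k Gᴴ + XM n k Q) * (stackM n k Q 0)ᴴ).submatrix
        finSumFinEquiv finSumFinEquiv =
      fromBlocks (1 + EkM n k * (Q * G)ᴴ) Q 0 0 := by
  simp only [UhatM, submatrix_add, submatrix_sub, Pi.add_apply, Pi.sub_apply, Matrix.add_mul,
    submatrix_mul_conjTranspose, submatrix_one_equiv, XM_submatrix_finSumFinEquiv,
    stackM_submatrix_finSumFinEquiv, topM_submatrix_finSumFinEquiv hkn,
    conjTranspose_fromRows_eq_fromCols_conjTranspose, fromRows_mul_fromCols, ← fromBlocks_one]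
  rw [sub_eq_add_neg, fromBlocks_neg, fromBlocks_add, fromBlocks_add, fromBlocks_add,
    conjTranspose_mul, ← Matrix.mul_assoc]
  congr 1
  · abel
  all_goals simp

theorem AhatM_submatrix_finSumFinEquiv (hkn : k ≤ n) (L R : Matrix (Fin n) (Fin n) ℂ)
    (Q : Matrix (Fin n) (Fin k) ℂ) (G : Matrix (Fin k) (Fin k) ℂ) :
    (AhatM n k L R Q G).submatrix finSumFinEquiv finSumFinEquiv =
      fromBlocks (L * (1 + EkM n k * (Q * G)ᴴ) * R) (L * Q) 0 0 := by
  rw [AhatM, ← submatrix_mul_equiv _ _ _ finSumFinEquiv,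
    ← submatrix_mul_equiv _ _ _ finSumFinEquiv, diagLI_submatrix_finSumFinEquiv,
    UhatM_add_mul_submatrix_finSumFinEquiv hkn, diagLI_submatrix_finSumFinEquiv,
    fromBlocks_multiply, fromBlocks_multiply]
  simp

end Blocks

/-- **Embedding of a unitary plus rank-`k` matrix.**
Let `A = L (I + E Z^H) R` with `L, R` unitary, `E = [I_k; 0]`, and let `Z = Q G` be an
economic QR factorization of `Z`. Set `m = n + k`, `X = [Q; −I_k]` and
`Û = I_m − X X^H`. Then (1) `Û` is unitary, and (2) the matrix
`Â = diag(L, I_k) (Û + ([G^H; 0] + X)[Q; 0]^H) diag(R, I_k)` has its last `k` rows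
zero and its leading `n × n` principal submatrix equal to `A`. -/
theorem embedding_theorem (n k : ℕ) (L R : Matrix (Fin n) (Fin n) ℂ)
    (Z Q : Matrix (Fin n) (Fin k) ℂ) (G : Matrix (Fin k) (Fin k) ℂ)
    (hQ : Q.conjTranspose * Q = 1)
    (hZ : Z = Q * G)
    (A : Matrix (Fin n) (Fin n) ℂ)
    (hA : A = L * (1 + EkM n k * Z.conjTranspose) * R) :
    UhatM n k Q ∈ Matrix.unitaryGroup (Fin (n + k)) ℂ ∧
    (∀ x y : Fin (n + k), n ≤ x.1 → AhatM n k L R Q G x y = 0) ∧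
    (∀ x y : Fin n, AhatM n k L R Q G ⟨x.1, by omega⟩ ⟨y.1, by omega⟩ = A x y) := by
  have hkn : k ≤ n := by simpa using card_le_card_of_mul_eq_one hQ
  have hblocks := AhatM_submatrix_finSumFinEquiv hkn L R Q G
  rw [← hZ, ← hA] at hblocks
  exact ⟨UhatM_mem_unitaryGroup hQ,
    apply_eq_zero_of_submatrix_finSumFinEquiv_eq_fromBlocks hblocks,
    apply_eq_of_submatrix_finSumFinEquiv_eq_fromBlocks hblocks⟩
end

section
/- Let m = n + k and let L, R ∈ ℂ^{m×m} be unitary matrices, where L is a proper k-lower Hessenberg matrix and R is a k-upper Hessenberg matrix. Let Q = diag(I_k, Q̂) where Q̂ ∈ ℂ^{n×n} is a unitary upper Hessenberg matrix, let Z ∈ ℂ^{m×k}, let E = [I_k; 0_{n×k}], and set F = Q + E Z^H and Â = L F R. If the last k rows of Â are zero (i.e. Â(n+1:m, 1:m) = 0), then Â is an upper Hessenberg matrix (Â_{ij} = 0 whenever i > j + 1). -/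
open Matrix

/-- `M` is `k`-upper Hessenberg: `m_{ij} = 0` whenever `i > j + k`. -/
def kUpperHessenberg (k : ℕ) {m : ℕ} (M : Matrix (Fin m) (Fin m) ℂ) : Prop :=
  ∀ i j : Fin m, j.1 + k < i.1 → M i j = 0

/-- `M` is `k`-lower Hessenberg: `m_{ij} = 0` whenever `j > i + k`. -/
def kLowerHessenberg (k : ℕ) {m : ℕ} (M : Matrix (Fin m) (Fin m) ℂ) : Prop :=
  ∀ i j : Fin m, i.1 + k < j.1 → M i j = 0

/-- A `k`-upper Hessenberg matrix is proper: the outermost entries `h_{j+k,j}` are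
all nonzero. -/
def ProperUpper (k : ℕ) {m : ℕ} (M : Matrix (Fin m) (Fin m) ℂ) : Prop :=
  ∀ i j : Fin m, i.1 = j.1 + k → M i j ≠ 0

/-- A `k`-lower Hessenberg matrix is proper: the outermost entries `h_{j,j+k}` are
all nonzero. -/
def ProperLower (k : ℕ) {m : ℕ} (M : Matrix (Fin m) (Fin m) ℂ) : Prop :=
  ∀ i j : Fin m, j.1 = i.1 + k → M i j ≠ 0

/-- The block diagonal matrix `diag(I_k, Q̂)` for `Q̂ ∈ ℂ^{n×n}`. -/
def diagIQ (n k : ℕ) (Qh : Matrix (Fin n) (Fin n) ℂ) :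
    Matrix (Fin (n + k)) (Fin (n + k)) ℂ :=
  Matrix.of fun x y =>
    if h : k ≤ x.1 ∧ k ≤ y.1 then Qh ⟨x.1 - k, by omega⟩ ⟨y.1 - k, by omega⟩
    else if x.1 = y.1 then 1 else 0

/-
`Lᴴ Â = F R` by unitarity of `L`. Rows `k+1, …, m` of `F` are upper Hessenberg and `R` is
`k`-upper Hessenberg, so `F R` is `(k+1)`-upper Hessenberg. Row `r + k` of `Lᴴ Â` combines
only rows `j ≥ r` of `Â`, since `Lᴴ` is `k`-upper Hessenberg, and the coefficient of row `r`
is `conj L_{r, r+k} ≠ 0`. Going upwards from the zero rows `n+1, …, m`, each row `r` of `Â`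
therefore vanishes left of the subdiagonal once all rows below it do.
-/

variable {m n k : ℕ}

theorem kUpperHessenberg_diagIQ {Qh : Matrix (Fin n) (Fin n) ℂ} (hQH : kUpperHessenberg 1 Qh) :
    kUpperHessenberg 1 (diagIQ n k Qh) := by
  intro x y hxy
  simp only [diagIQ, Matrix.of_apply]
  split_ifs
  · exact hQH _ _ (by simp only; omega)
  · omega
  · rfl

theorem EkM_mul_apply_of_le {p : ℕ} (M : Matrix (Fin k) (Fin p) ℂ) {x : Fin m} (hx : k ≤ x.1)
    (y : Fin p) : (EkM m k * M) x y = 0 := by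
  rw [mul_apply]
  exact Finset.sum_eq_zero fun j _ => by simp [EkM, show x.1 ≠ j.1 by omega]

theorem mul_apply_eq_zero_of_row {a b : ℕ} {A B : Matrix (Fin m) (Fin m) ℂ} {i l : Fin m}
    (hA : ∀ p : Fin m, p.1 + a < i.1 → A i p = 0) (hB : kUpperHessenberg b B)
    (hil : l.1 + a + b < i.1) : (A * B) i l = 0 := by
  refine (mul_apply ..).trans <| Finset.sum_eq_zero fun p _ => ?_
  by_cases hp : p.1 + a < i.1
  · rw [hA p hp, zero_mul]
  · rw [hB p l (by omega), mul_zero]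

theorem conjTranspose_mul_apply_eq_single {L A : Matrix (Fin m) (Fin m) ℂ}
    (hLH : kLowerHessenberg k L) {r l : Fin m} (hr : r.1 + k < m)
    (hbelow : ∀ j : Fin m, r < j → A j l = 0) :
    (Lᴴ * A) ⟨r.1 + k, hr⟩ l = star (L r ⟨r.1 + k, hr⟩) * A r l := by
  refine (mul_apply ..).trans <| Finset.sum_eq_single r (fun j _ hjr => ?_) (by simp)
  rcases lt_or_gt_of_ne hjr with hj | hj
  · rw [conjTranspose_apply, hLH j _ (by dsimp only; omega), star_zero, zero_mul]
  · rw [hbelow j hj, mul_zero]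

theorem kUpperHessenberg_one_of_conjTranspose_mul {L A : Matrix (Fin (n + k)) (Fin (n + k)) ℂ}
    (hLH : kLowerHessenberg k L) (hLp : ProperLower k L)
    (hLA : kUpperHessenberg (k + 1) (Lᴴ * A))
    (hzero : ∀ x y : Fin (n + k), n ≤ x.1 → A x y = 0) :
    kUpperHessenberg 1 A := by
  intro r
  induction h : n + k - r.1 using Nat.strong_induction_on generalizing r with
  | _ d ih =>
    intro l hl
    by_cases hrn : n ≤ r.1
    · exact hzero r l hrn
    have hr : r.1 + k < n + k := by omega
    have hbelow : ∀ j : Fin (n + k), r < j → A j l = 0 := fun j hj =>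
      ih _ (by rw [← h]; exact Nat.sub_lt_sub_left (by omega) hj) j rfl l (by omega)
    have hrow := hLA ⟨r.1 + k, hr⟩ l (by simp only; omega)
    rw [conjTranspose_mul_apply_eq_single hLH hr hbelow] at hrow
    exact (mul_eq_zero.mp hrow).resolve_left (star_ne_zero.mpr (hLp r _ rfl))

theorem LFR_hessenberg_general (n k : ℕ)
    (L R : Matrix (Fin (n + k)) (Fin (n + k)) ℂ)
    (hLu : L ∈ Matrix.unitaryGroup (Fin (n + k)) ℂ)
    (hLH : kLowerHessenberg k L) (hLp : ProperLower k L)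
    (hRH : kUpperHessenberg k R)
    (Qh : Matrix (Fin n) (Fin n) ℂ)
    (hQH : kUpperHessenberg 1 Qh)
    (Z : Matrix (Fin (n + k)) (Fin k) ℂ)
    (F : Matrix (Fin (n + k)) (Fin (n + k)) ℂ)
    (hF : F = diagIQ n k Qh + EkM (n + k) k * Z.conjTranspose)
    (Ahat : Matrix (Fin (n + k)) (Fin (n + k)) ℂ)
    (hAhat : Ahat = L * F * R)
    (hzero : ∀ x y : Fin (n + k), n ≤ x.1 → Ahat x y = 0) :
    kUpperHessenberg 1 Ahat := by
  have hFR : kUpperHessenberg (k + 1) (F * R) := fun i l hil => by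
    refine mul_apply_eq_zero_of_row (a := 1) (fun p hp => ?_) hRH (by omega)
    rw [hF, Matrix.add_apply, kUpperHessenberg_diagIQ hQH i p hp,
      EkM_mul_apply_of_le _ (by omega), add_zero]
  have hLA : Lᴴ * Ahat = F * R := by
    rw [hAhat, Matrix.mul_assoc, ← Matrix.mul_assoc Lᴴ L, ← star_eq_conjTranspose, hLu.1,
      Matrix.one_mul]
  exact kUpperHessenberg_one_of_conjTranspose_mul hLH hLp (hLA ▸ hFR) hzero

/-- **LFR decompositions yield Hessenberg form.**
Let `m = n + k`, let `L` be a proper unitary `k`-lower Hessenberg matrix and `R` a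
unitary `k`-upper Hessenberg matrix. Let `Q = diag(I_k, Q̂)` with `Q̂` unitary upper
Hessenberg, and let `F = Q + E Z^H` with `E = [I_k; 0]`. If `Â = L F R` has its last
`k` rows equal to zero, then `Â` is an upper Hessenberg matrix. -/
theorem LFR_hessenberg (n k : ℕ)
    (L R : Matrix (Fin (n + k)) (Fin (n + k)) ℂ)
    (hLu : L ∈ Matrix.unitaryGroup (Fin (n + k)) ℂ)
    (hLH : kLowerHessenberg k L) (hLp : ProperLower k L)
    (hRu : R ∈ Matrix.unitaryGroup (Fin (n + k)) ℂ)
    (hRH : kUpperHessenberg k R)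
    (Qh : Matrix (Fin n) (Fin n) ℂ)
    (hQu : Qh ∈ Matrix.unitaryGroup (Fin n) ℂ)
    (hQH : kUpperHessenberg 1 Qh)
    (Z : Matrix (Fin (n + k)) (Fin k) ℂ)
    (F : Matrix (Fin (n + k)) (Fin (n + k)) ℂ)
    (hF : F = diagIQ n k Qh + EkM (n + k) k * Z.conjTranspose)
    (Ahat : Matrix (Fin (n + k)) (Fin (n + k)) ℂ)
    (hAhat : Ahat = L * F * R)
    (hzero : ∀ x y : Fin (n + k), n ≤ x.1 → Ahat x y = 0) :
    kUpperHessenberg 1 Ahat :=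
  LFR_hessenberg_general n k L R hLu hLH hLp hRH Qh hQH Z F hF Ahat hAhat hzero
end

section
/- Let H ∈ ℂ^{n×n} be a unitary lower Hessenberg matrix (h_{ij} = 0 for j > i + 1) and let B ∈ ℂ^{n×n} be a unitary k-upper Hessenberg matrix, with k < n. Then there exist a unitary k-upper Hessenberg matrix B̃ ∈ ℂ^{n×n} and a unitary lower Hessenberg matrix Ĥ ∈ ℂ^{(n−k)×(n−k)} such that H B = B̃ · diag(Ĥ, I_k). -/
open Matrix

/-- The block diagonal matrix `diag(Ĥ, I_k)` for `Ĥ ∈ ℂ^{(n−k)×(n−k)}`. -/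
def diagHI (n k : ℕ) (Hh : Matrix (Fin (n - k)) (Fin (n - k)) ℂ) :
    Matrix (Fin n) (Fin n) ℂ :=
  Matrix.of fun x y =>
    if h : x.1 < n - k ∧ y.1 < n - k then Hh ⟨x.1, h.1⟩ ⟨y.1, h.2⟩
    else if x.1 = y.1 then 1 else 0

/-!
Put `U = H * B`. It suffices to find a unitary upper Hessenberg `P` of size `n - k` such that
`U * diag(P, I_k)` is `k`-upper Hessenberg: then `B̃ = U * diag(P, I_k)` and `Ĥ = Pᴴ`.
The `j`-th column of `P`, padded with zeros, has to lie in `span(e₀, …, e_{j+1})` and be mapped by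
`U` into `span(e₀, …, e_{j+k})`. Both subspaces lie in `Bᴴ span(e₀, …, e_{j+k+1})`, since `B` is
`k`-upper Hessenberg and `Hᴴ` is upper Hessenberg, so a dimension count shows that they meet in
dimension `> j`. Orthonormal columns can then be chosen greedily, each orthogonal to the previous
ones.
-/

open Module

section LeadingSubspace

variable (𝕜 : Type*) [RCLike 𝕜]

def leadingSubspace (n m : ℕ) : Submodule 𝕜 (EuclideanSpace 𝕜 (Fin n)) where
  carrier := {v | ∀ i : Fin n, m ≤ i.1 → v i = 0}
  add_mem' hu hv i hi := by simp [hu i hi, hv i hi]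
  zero_mem' _ _ := rfl
  smul_mem' c v hv i hi := by simp [hv i hi]

variable {𝕜} {n m : ℕ}

@[simp]
lemma mem_leadingSubspace {v : EuclideanSpace 𝕜 (Fin n)} :
    v ∈ leadingSubspace 𝕜 n m ↔ ∀ i : Fin n, m ≤ i.1 → v i = 0 :=
  Iff.rfl

lemma leadingSubspace_mono {m' : ℕ} (h : m ≤ m') :
    leadingSubspace 𝕜 n m ≤ leadingSubspace 𝕜 n m' :=
  fun _ hv i hi => hv i (h.trans hi)

lemma leadingSubspace_eq_top (h : n ≤ m) : leadingSubspace 𝕜 n m = ⊤ :=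
  eq_top_iff.2 fun _ _ i hi => absurd (i.2.trans_le (h.trans hi)) (lt_irrefl _)

lemma leadingSubspace_min : leadingSubspace 𝕜 n (min m n) = leadingSubspace 𝕜 n m := by
  ext v
  simp only [mem_leadingSubspace]
  exact forall_congr' fun i => by grind

variable (𝕜) in
def extendByZero (h : m ≤ n) : EuclideanSpace 𝕜 (Fin m) →ₗᵢ[𝕜] EuclideanSpace 𝕜 (Fin n) where
  toFun v := WithLp.toLp 2 fun i => if hi : i.1 < m then v ⟨i, hi⟩ else 0
  map_add' u v := by ext i; by_cases hi : i.1 < m <;> simp [hi]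
  map_smul' c v := by ext i; by_cases hi : i.1 < m <;> simp [hi]
  norm_map' v := by
    simp only [LinearMap.coe_mk, AddHom.coe_mk, EuclideanSpace.norm_eq]
    congr 1
    refine (Fintype.sum_of_injective (Fin.castLE h) (Fin.castLE_injective h) _ _ ?_ ?_).symm
    · intro i hi
      rw [dif_neg fun him => hi ⟨⟨i, him⟩, rfl⟩]
      simp
    · intro i
      simp

@[simp]
lemma extendByZero_apply_castLE (h : m ≤ n) (v : EuclideanSpace 𝕜 (Fin m)) (i : Fin m) :
    extendByZero 𝕜 h v (Fin.castLE h i) = v i := by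
  simp [extendByZero]

lemma mem_leadingSubspace_of_extendByZero_mem {m' : ℕ} (h : m ≤ n)
    {v : EuclideanSpace 𝕜 (Fin m)} (hv : extendByZero 𝕜 h v ∈ leadingSubspace 𝕜 n m') :
    v ∈ leadingSubspace 𝕜 m m' :=
  fun i hi => by simpa using hv (Fin.castLE h i) hi

lemma range_extendByZero (h : m ≤ n) :
    LinearMap.range (extendByZero 𝕜 h).toLinearMap = leadingSubspace 𝕜 n m := by
  ext v
  constructor
  · rintro ⟨w, rfl⟩ i hi
    simp [extendByZero, hi.not_gt]
  · intro hv
    refine ⟨WithLp.toLp 2 fun i => v (Fin.castLE h i), ?_⟩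
    ext i
    by_cases hi : i.1 < m
    · simp [extendByZero, hi]
    · simp [extendByZero, hi, hv i (not_lt.1 hi)]

lemma finrank_leadingSubspace : finrank 𝕜 (leadingSubspace 𝕜 n m) = min m n := by
  rw [← leadingSubspace_min, ← range_extendByZero (min_le_right m n),
    LinearMap.finrank_range_of_inj (extendByZero 𝕜 _).injective, finrank_euclideanSpace_fin]

end LeadingSubspace

section Orthonormal

variable {𝕜 E : Type*} [RCLike 𝕜] [NormedAddCommGroup E] [InnerProductSpace 𝕜 E]

lemma Orthonormal.snoc {t : ℕ} {g : Fin t → E} {x : E} (hg : Orthonormal 𝕜 g) (hx : ‖x‖ = 1)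
    (hgx : ∀ i, inner 𝕜 (g i) x = 0) : Orthonormal 𝕜 (Fin.snoc g x : Fin (t + 1) → E) := by
  refine ⟨fun i => ?_, fun i j hij => ?_⟩
  · cases i using Fin.lastCases <;> simp [hx, hg.1]
  · cases i using Fin.lastCases <;> cases j using Fin.lastCases
    · exact absurd rfl hij
    · simpa using inner_eq_zero_symm.1 (hgx _)
    · simpa using hgx _
    · simpa using hg.2 fun h => hij (congrArg _ h)

variable [FiniteDimensional 𝕜 E]

lemma Submodule.exists_norm_eq_one_mem_orthogonal {S W : Submodule 𝕜 E}
    (h : finrank 𝕜 W < finrank 𝕜 S) : ∃ x ∈ S, ‖x‖ = 1 ∧ x ∈ Wᗮ := by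
  have hndisj : ¬ Disjoint S Wᗮ := fun hd => by
    have := Submodule.finrank_add_finrank_le_of_disjoint hd
    have := W.finrank_add_finrank_orthogonal
    omega
  obtain ⟨x, hxS, hxW, hx0⟩ : ∃ x ∈ S, x ∈ Wᗮ ∧ x ≠ 0 := by
    simpa [Submodule.disjoint_def] using hndisj
  exact ⟨(‖x‖⁻¹ : 𝕜) • x, S.smul_mem _ hxS, norm_smul_inv_norm hx0, Wᗮ.smul_mem _ hxW⟩

theorem exists_orthonormal_forall_mem {t : ℕ} (S : Fin t → Submodule 𝕜 E)
    (hS : ∀ i, i.1 < finrank 𝕜 (S i)) : ∃ g : Fin t → E, Orthonormal 𝕜 g ∧ ∀ i, g i ∈ S i := by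
  induction t with
  | zero => exact ⟨finZeroElim, .of_isEmpty _, finZeroElim⟩
  | succ t ih =>
    obtain ⟨g, hg, hgS⟩ := ih (fun i => S i.castSucc) (fun i => hS i.castSucc)
    have hspan : finrank 𝕜 (Submodule.span 𝕜 (Set.range g)) < finrank 𝕜 (S (Fin.last t)) :=
      (finrank_range_le_card g).trans_lt (by simpa using hS (Fin.last t))
    obtain ⟨x, hxS, hx, hxg⟩ := Submodule.exists_norm_eq_one_mem_orthogonal hspan
    refine ⟨Fin.snoc g x, hg.snoc hx fun i => ?_, Fin.lastCases (by simpa) (by simpa)⟩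
    exact (Submodule.mem_orthogonal _ _).1 hxg _ (Submodule.subset_span ⟨i, rfl⟩)

end Orthonormal

section UnitaryMatrix

variable {𝕜 ι : Type*} [RCLike 𝕜] [Fintype ι] [DecidableEq ι]

lemma finrank_comap_toEuclideanLin {U : Matrix ι ι 𝕜} (hU : U ∈ unitaryGroup ι 𝕜)
    (W : Submodule 𝕜 (EuclideanSpace 𝕜 ι)) :
    finrank 𝕜 (W.comap (toEuclideanLin U)) = finrank 𝕜 W := by
  let e := LinearEquiv.ofLinearMap (re₁₂ := inferInstance) (re₂₁ := inferInstance)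
    (toEuclideanLin U) (toEuclideanLin (star U))
    (by simp [← toLpLin_mul_same, Unitary.mul_star_self_of_mem hU])
    (by simp [← toLpLin_mul_same, Unitary.star_mul_self_of_mem hU])
  exact (Submodule.comap_equiv_eq_map_symm e W).symm ▸ e.symm.finrank_map_eq W

lemma mem_unitaryGroup_of_orthonormal {p : ι → EuclideanSpace 𝕜 ι} (hp : Orthonormal 𝕜 p) :
    Matrix.of (fun i j => p j i) ∈ unitaryGroup ι 𝕜 := by
  rw [mem_unitaryGroup_iff', star_eq_conjTranspose]
  ext i j
  rw [← inner_matrix_col_col, one_apply]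
  exact orthonormal_iff_ite.1 hp i j

end UnitaryMatrix

section Hessenberg

variable {n k : ℕ} {M : Matrix (Fin n) (Fin n) ℂ}

lemma kLowerHessenberg.conjTranspose (hM : kLowerHessenberg k M) : kUpperHessenberg k Mᴴ :=
  fun i j hij => by rw [conjTranspose_apply, hM j i hij, star_zero]

lemma kUpperHessenberg.conjTranspose (hM : kUpperHessenberg k M) : kLowerHessenberg k Mᴴ :=
  fun i j hij => by rw [conjTranspose_apply, hM j i hij, star_zero]

lemma kUpperHessenberg_of_col_mem
    (h : ∀ j : Fin n, WithLp.toLp 2 (Mᵀ j) ∈ leadingSubspace ℂ n (j + k + 1)) :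
    kUpperHessenberg k M :=
  fun i j hij => h j i hij

lemma kUpperHessenberg.leadingSubspace_le_comap (hM : kUpperHessenberg k M) (m : ℕ) :
    leadingSubspace ℂ n m ≤ (leadingSubspace ℂ n (m + k)).comap (toEuclideanLin M) := by
  intro v hv i hi
  simp only [toLpLin_apply, PiLp.toLp_apply, mulVec, dotProduct]
  refine Finset.sum_eq_zero fun j _ => ?_
  by_cases hj : j.1 + k < i.1
  · rw [hM i j hj, zero_mul]
  · rw [hv j (by omega), mul_zero]

lemma kLowerHessenberg.comap_leadingSubspace_le (hM : kLowerHessenberg k M)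
    (hMu : M ∈ unitaryGroup (Fin n) ℂ) (m : ℕ) :
    (leadingSubspace ℂ n m).comap (toEuclideanLin M) ≤ leadingSubspace ℂ n (m + k) := by
  intro v hv
  simpa [← toLpLin_mul_same, ← star_eq_conjTranspose, Unitary.star_mul_self_of_mem hMu]
    using hM.conjTranspose.leadingSubspace_le_comap m hv

end Hessenberg

section BlockDiagonal

variable {n k : ℕ}

def finSubSumEquiv (n k : ℕ) : Fin n ≃ Fin (n - k) ⊕ Fin (n - (n - k)) :=
  (finCongr (Nat.add_sub_of_le (Nat.sub_le n k)).symm).trans finSumFinEquiv.symm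

lemma diagHI_eq_submatrix_fromBlocks (A : Matrix (Fin (n - k)) (Fin (n - k)) ℂ) :
    diagHI n k A =
      (fromBlocks A 0 0 (1 : Matrix (Fin (n - (n - k))) (Fin (n - (n - k))) ℂ)).submatrix
        (finSubSumEquiv n k) (finSubSumEquiv n k) := by
  ext i j
  obtain ⟨p, rfl⟩ := (finSubSumEquiv n k).symm.surjective i
  obtain ⟨q, rfl⟩ := (finSubSumEquiv n k).symm.surjective j
  rcases p with a | a <;> rcases q with b | b <;>
    simp [diagHI, finSubSumEquiv, one_apply, Fin.ext_iff] <;> omega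

lemma diagHI_mul (A B : Matrix (Fin (n - k)) (Fin (n - k)) ℂ) :
    diagHI n k A * diagHI n k B = diagHI n k (A * B) := by
  simp [diagHI_eq_submatrix_fromBlocks, fromBlocks_multiply]

lemma diagHI_conjTranspose (A : Matrix (Fin (n - k)) (Fin (n - k)) ℂ) :
    (diagHI n k A)ᴴ = diagHI n k Aᴴ := by
  simp [diagHI_eq_submatrix_fromBlocks, fromBlocks_conjTranspose]

lemma diagHI_mem_unitaryGroup {A : Matrix (Fin (n - k)) (Fin (n - k)) ℂ}
    (hA : A ∈ unitaryGroup (Fin (n - k)) ℂ) : diagHI n k A ∈ unitaryGroup (Fin n) ℂ := by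
  rw [mem_unitaryGroup_iff, star_eq_conjTranspose, diagHI_conjTranspose, diagHI_mul,
    ← star_eq_conjTranspose, Unitary.mul_star_self_of_mem hA, diagHI_eq_submatrix_fromBlocks]
  simp

lemma diagHI_col_eq_extendByZero (A : Matrix (Fin (n - k)) (Fin (n - k)) ℂ)
    {j : Fin n} (hj : j.1 < n - k) :
    WithLp.toLp 2 ((diagHI n k A)ᵀ j) =
      extendByZero ℂ (Nat.sub_le n k) (WithLp.toLp 2 (Aᵀ ⟨j, hj⟩)) := by
  ext i
  by_cases hi : i.1 < n - k
  · simp [diagHI, extendByZero, hi, hj]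
  · simp [diagHI, extendByZero, hi]
    omega

lemma kUpperHessenberg_mul_diagHI {U : Matrix (Fin n) (Fin n) ℂ}
    {A : Matrix (Fin (n - k)) (Fin (n - k)) ℂ}
    (hA : ∀ j : Fin (n - k), extendByZero ℂ (Nat.sub_le n k) (WithLp.toLp 2 (Aᵀ j)) ∈
      (leadingSubspace ℂ n (j + k + 1)).comap (toEuclideanLin U)) :
    kUpperHessenberg k (U * diagHI n k A) := by
  refine kUpperHessenberg_of_col_mem fun j => ?_
  by_cases hj : j.1 < n - k
  · have hcol : WithLp.toLp 2 ((U * diagHI n k A)ᵀ j) =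
        toEuclideanLin U (WithLp.toLp 2 ((diagHI n k A)ᵀ j)) := by
      ext i; rfl
    rw [hcol, diagHI_col_eq_extendByZero A hj]
    exact hA ⟨j, hj⟩
  · rw [leadingSubspace_eq_top (by omega)]
    trivial

end BlockDiagonal

section Turnover

variable {n k : ℕ} {H B : Matrix (Fin n) (Fin n) ℂ}

/-- The admissible `j`-th columns of `diag(P, I_k)` for `U * diag(P, I_k)` to be `k`-upper
Hessenberg with `P` upper Hessenberg. -/
noncomputable def turnoverSubspace (n k : ℕ) (U : Matrix (Fin n) (Fin n) ℂ) (j : ℕ) :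
    Submodule ℂ (EuclideanSpace ℂ (Fin n)) :=
  leadingSubspace ℂ n (min (j + 2) (n - k)) ⊓
    (leadingSubspace ℂ n (j + k + 1)).comap (toEuclideanLin U)

theorem lt_finrank_turnoverSubspace
    (hHu : H ∈ unitaryGroup (Fin n) ℂ) (hH : kLowerHessenberg 1 H)
    (hBu : B ∈ unitaryGroup (Fin n) ℂ) (hB : kUpperHessenberg k B) {j : ℕ} (hj : j < n - k) :
    j < finrank ℂ (turnoverSubspace n k (H * B) j) := by
  set A := leadingSubspace ℂ n (min (j + 2) (n - k))
  set C := (leadingSubspace ℂ n (j + k + 1)).comap (toEuclideanLin (H * B))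
  set D := (leadingSubspace ℂ n (j + k + 2)).comap (toEuclideanLin B)
  have hAD : A ≤ D := (hB.leadingSubspace_le_comap _).trans
    (Submodule.comap_mono (leadingSubspace_mono (by omega)))
  have hCD : C ≤ D := by
    rw [show C = ((leadingSubspace ℂ n (j + k + 1)).comap (toEuclideanLin H)).comap
      (toEuclideanLin B) by simp [C, toLpLin_mul_same, Submodule.comap_comp]]
    exact Submodule.comap_mono (hH.comap_leadingSubspace_le hHu _)
  have hA : finrank ℂ A = min (j + 2) (n - k) := by
    rw [finrank_leadingSubspace]; omega
  have hC : finrank ℂ C = j + k + 1 := by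
    rw [finrank_comap_toEuclideanLin (mul_mem hHu hBu), finrank_leadingSubspace]; omega
  have hD : finrank ℂ D = min (j + k + 2) n := by
    rw [finrank_comap_toEuclideanLin hBu, finrank_leadingSubspace]
  have hsup := Submodule.finrank_sup_add_finrank_inf_eq A C
  have hsupD := Submodule.finrank_mono (sup_le hAD hCD)
  change j < finrank ℂ (A ⊓ C : Submodule ℂ _)
  omega

theorem exists_unitary_upperHessenberg_turnover
    (hHu : H ∈ unitaryGroup (Fin n) ℂ) (hH : kLowerHessenberg 1 H)
    (hBu : B ∈ unitaryGroup (Fin n) ℂ) (hB : kUpperHessenberg k B) :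
    ∃ P ∈ unitaryGroup (Fin (n - k)) ℂ,
      kUpperHessenberg 1 P ∧ kUpperHessenberg k (H * B * diagHI n k P) := by
  obtain ⟨g, hg, hgS⟩ := exists_orthonormal_forall_mem (𝕜 := ℂ) (fun j : Fin (n - k) =>
    turnoverSubspace n k (H * B) j) fun j => lt_finrank_turnoverSubspace hHu hH hBu hB j.2
  have hg_range : ∀ j, g j ∈ LinearMap.range (extendByZero ℂ (Nat.sub_le n k)).toLinearMap :=
    fun j => by
      rw [range_extendByZero]
      exact leadingSubspace_mono (min_le_right _ _) (hgS j).1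
  choose p hp using hg_range
  have hp_orth : Orthonormal ℂ p := by
    rw [← (extendByZero ℂ (Nat.sub_le n k)).orthonormal_comp_iff]
    exact (show _ ∘ p = g from funext hp) ▸ hg
  refine ⟨Matrix.of fun a b => p b a, mem_unitaryGroup_of_orthonormal hp_orth,
    kUpperHessenberg_of_col_mem fun j => ?_, kUpperHessenberg_mul_diagHI fun j => ?_⟩
  · refine leadingSubspace_mono (min_le_left (j.1 + 2) (n - k))
      (mem_leadingSubspace_of_extendByZero_mem (Nat.sub_le n k) ?_)
    exact (hp j).symm ▸ (hgS j).1
  · exact (hp j).symm ▸ (hgS j).2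

end Turnover

theorem turnover_lower_general (n k : ℕ)
    (H B : Matrix (Fin n) (Fin n) ℂ)
    (hHu : H ∈ Matrix.unitaryGroup (Fin n) ℂ) (hH : kLowerHessenberg 1 H)
    (hBu : B ∈ Matrix.unitaryGroup (Fin n) ℂ) (hB : kUpperHessenberg k B) :
    ∃ (Bt : Matrix (Fin n) (Fin n) ℂ)
      (Hh : Matrix (Fin (n - k)) (Fin (n - k)) ℂ),
      Bt ∈ Matrix.unitaryGroup (Fin n) ℂ ∧ kUpperHessenberg k Bt ∧
      Hh ∈ Matrix.unitaryGroup (Fin (n - k)) ℂ ∧ kLowerHessenberg 1 Hh ∧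
      H * B = Bt * diagHI n k Hh := by
  obtain ⟨P, hPu, hP, hHBP⟩ := exists_unitary_upperHessenberg_turnover hHu hH hBu hB
  have hDu := diagHI_mem_unitaryGroup hPu
  refine ⟨H * B * diagHI n k P, Pᴴ, mul_mem (mul_mem hHu hBu) hDu, hHBP,
    Unitary.star_mem hPu, hP.conjTranspose, ?_⟩
  rw [mul_assoc, ← diagHI_conjTranspose, ← star_eq_conjTranspose,
    Unitary.mul_star_self_of_mem hDu, mul_one]

/-- **Turnover through a `k`-upper Hessenberg factor (lower Hessenberg case).**
If `H ∈ ℂ^{n×n}` is unitary lower Hessenberg and `B ∈ ℂ^{n×n}` is unitary `k`-upper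
Hessenberg with `k < n`, then `H B = B̃ · diag(Ĥ, I_k)` for some unitary `k`-upper
Hessenberg `B̃ ∈ ℂ^{n×n}` and some unitary lower Hessenberg `Ĥ ∈ ℂ^{(n−k)×(n−k)}`. -/
theorem turnover_lower (n k : ℕ) (hk : k < n)
    (H B : Matrix (Fin n) (Fin n) ℂ)
    (hHu : H ∈ Matrix.unitaryGroup (Fin n) ℂ) (hH : kLowerHessenberg 1 H)
    (hBu : B ∈ Matrix.unitaryGroup (Fin n) ℂ) (hB : kUpperHessenberg k B) :
    ∃ (Bt : Matrix (Fin n) (Fin n) ℂ)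
      (Hh : Matrix (Fin (n - k)) (Fin (n - k)) ℂ),
      Bt ∈ Matrix.unitaryGroup (Fin n) ℂ ∧ kUpperHessenberg k Bt ∧
      Hh ∈ Matrix.unitaryGroup (Fin (n - k)) ℂ ∧ kLowerHessenberg 1 Hh ∧
      H * B = Bt * diagHI n k Hh :=
  turnover_lower_general n k H B hHu hH hBu hB
end

section
/- Let L ∈ ℂ^{m×m} be a unitary, proper k-lower Hessenberg matrix, with k < m. Then the bottom-left k×k corner block M = L(m−k+1:m, 1:k) is nonsingular. -/
open Matrix

private lemma sum_fin_restrict {m k : ℕ} (hk : k ≤ m) (f : Fin m → ℂ)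
    (h0 : ∀ j : Fin m, k ≤ j.1 → f j = 0) :
    ∑ j : Fin m, f j = ∑ b : Fin k, f (Fin.castLE hk b) := by
  classical
  have h1 : (∑ b : Fin k, f (Fin.castLE hk b)) =
      ∑ j ∈ Finset.univ.map (Fin.castLEEmb hk), f j := by
    rw [Finset.sum_map]
    rfl
  rw [h1]
  symm
  apply Finset.sum_subset (Finset.subset_univ _)
  intro j _ hj
  apply h0
  by_contra h
  push_neg at h
  exact hj (Finset.mem_map.mpr ⟨⟨j.1, h⟩, Finset.mem_univ _, Fin.ext rfl⟩)

/-- **Nonsingular corner of a proper unitary `k`-lower Hessenberg matrix.**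
If `L ∈ ℂ^{m×m}` is unitary, `k`-lower Hessenberg and proper, with `k < m`, then the
bottom-left `k × k` corner block `M = L(m−k+1:m, 1:k)` is nonsingular. -/
theorem proper_corner_nonsingular (m k : ℕ) (hk : k < m)
    (L : Matrix (Fin m) (Fin m) ℂ)
    (hLu : L ∈ Matrix.unitaryGroup (Fin m) ℂ)
    (hLH : kLowerHessenberg k L) (hLp : ProperLower k L) :
    (Matrix.of fun a b : Fin k =>
        L ⟨m - k + a.1, by omega⟩ ⟨b.1, by omega⟩).det ≠ 0 := by
  classical
  intro hdet
  obtain ⟨v, hv, hMv⟩ := Matrix.exists_mulVec_eq_zero_iff.mpr hdet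
  set x : Fin m → ℂ := fun j => if h : j.1 < k then v ⟨j.1, h⟩ else 0 with hxdef
  set y := L.mulVec x with hydef
  have hxk : ∀ j : Fin m, k ≤ j.1 → x j = 0 := by
    intro j hj; simp only [hxdef]; rw [dif_neg (by omega)]
  -- y vanishes on the last k rows
  have hybot : ∀ i : Fin m, m - k ≤ i.1 → y i = 0 := by
    intro i hi
    have hi2 : i.1 - (m - k) < k := by omega
    have hmv := congrFun hMv ⟨i.1 - (m - k), hi2⟩
    rw [Matrix.mulVec, dotProduct] at hmv
    simp only [Pi.zero_apply] at hmv
    rw [hydef, Matrix.mulVec, dotProduct]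
    rw [sum_fin_restrict hk.le _ (fun j hj => by
      show L i j * x j = 0
      rw [hxk j hj, mul_zero])]
    rw [← hmv]
    apply Finset.sum_congr rfl
    intro b _
    have h1 : (⟨m - k + (i.1 - (m - k)), by omega⟩ : Fin m) = i :=
      Fin.ext (show m - k + (i.1 - (m - k)) = i.1 by omega)
    have h2 : x (Fin.castLE hk.le b) = v b := dif_pos b.2
    rw [h2]
    simp only [Matrix.of_apply]
    rw [h1]
    congr 1
  -- star L * L = 1
  have hsL : star L * L = 1 := hLu.1
  have hxy : (star L).mulVec y = x := by
    rw [hydef, Matrix.mulVec_mulVec, hsL, Matrix.one_mulVec]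
  -- the triangular system
  set S : Matrix (Fin (m - k)) (Fin (m - k)) ℂ :=
    fun b a => star (L ⟨a.1, by omega⟩ ⟨k + b.1, by omega⟩) with hSdef
  set y' : Fin (m - k) → ℂ := fun a => y ⟨a.1, by omega⟩ with hy'def
  have hSmul : S.mulVec y' = 0 := by
    funext b
    have hkb : k + b.1 < m := by omega
    have hx0 : x ⟨k + b.1, hkb⟩ = 0 := hxk _ (Nat.le_add_right k b.1)
    have h1 := congrFun hxy ⟨k + b.1, hkb⟩
    rw [hx0] at h1
    rw [Matrix.mulVec, dotProduct] at h1
    rw [sum_fin_restrict (show m - k ≤ m by omega) _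
      (fun i hi => show star L ⟨k + b.1, hkb⟩ i * y i = 0 by
        rw [hybot i hi, mul_zero])] at h1
    rw [Matrix.mulVec, dotProduct, Pi.zero_apply, ← h1]
    apply Finset.sum_congr rfl
    intro a _
    rfl
  have hSdet : S.det ≠ 0 := by
    have htri : S.BlockTriangular id := by
      intro i j hij
      have hji : j.1 < i.1 := hij
      show star (L ⟨j.1, by omega⟩ ⟨k + i.1, by omega⟩) = 0
      rw [hLH _ _ (show j.1 + k < k + i.1 by omega), star_zero]
    rw [Matrix.det_of_upperTriangular htri]
    apply Finset.prod_ne_zero_iff.mpr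
    intro b _
    show star (L ⟨b.1, by omega⟩ ⟨k + b.1, by omega⟩) ≠ 0
    exact star_ne_zero.mpr (hLp _ _ (Nat.add_comm k b.1))
  have hy'0 : y' = 0 := by
    by_contra h
    exact hSdet (Matrix.exists_mulVec_eq_zero_iff.mp ⟨y', h, hSmul⟩)
  have hy0 : y = 0 := by
    funext i
    rcases lt_or_ge i.1 (m - k) with h | h
    · have := congrFun hy'0 ⟨i.1, h⟩
      simpa [hy'def] using this
    · exact hybot i h
  have hx0 : x = 0 := by rw [← hxy, hy0, Matrix.mulVec_zero]
  apply hv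
  funext b
  have hb := congrFun hx0 (Fin.castLE hk.le b)
  simp only [Pi.zero_apply] at hb
  have : x (Fin.castLE hk.le b) = v b := dif_pos b.2
  rw [this] at hb
  exact hb
end
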